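/- arXiv:1806.03259 — 10 statements merged into one kernel-verified Lean document; each statement's English description precedes it below -/
import Mathlib

section
/- Let λ ∈ (0,1), φ ∈ (0,π], θ = arcsin √λ, and δ = arccos(1 − λ(1 − cos φ)). Let G be the 2×2 complex matrix with entries G₁₁ = −e^{iφ}(e^{iφ} sin²θ + cos²θ), G₁₂ = (1 − e^{iφ}) sin θ cos θ, G₂₁ = e^{iφ}(1 − e^{iφ}) sin θ cos θ, G₂₂ = −e^{iφ} cos²θ − sin²θ, and let v be the column vector (sin θ, cos θ)ᵀ. Then for every integer k ≥ 0, the first component of G^k v equals a_k^φ = (sin θ / sin δ)·(−1)^k·e^{i(k−1)φ}·(e^{iφ} sin((k+1)δ) − sin(kδ)). -/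
lemma sin_two_step (d b : ℝ) :
    Real.sin (b + d) + Real.sin (b - d) = 2 * Real.cos d * Real.sin b := by
  rw [Real.sin_add, Real.sin_sub]; ring

/-- With λ ∈ (0,1), φ ∈ (0,π], θ = arcsin √λ,
δ = arccos(1 − λ(1 − cos φ)), G the matched-phase Grover iteration matrix and
v = (sin θ, cos θ)ᵀ the initial state, for every k ≥ 0 the first component of
G^k v equals (sin θ / sin δ)·(−1)^k·e^{i(k−1)φ}·(e^{iφ} sin((k+1)δ) − sin(kδ)). -/
theorem grover_amplitude_after_k_iterations
    (lam φ : ℝ) (hlam : lam ∈ Set.Ioo (0 : ℝ) 1) (hφ : φ ∈ Set.Ioc 0 Real.pi)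
    (θ δ : ℝ) (hθ : θ = Real.arcsin (Real.sqrt lam))
    (hδ : δ = Real.arccos (1 - lam * (1 - Real.cos φ)))
    (G : Matrix (Fin 2) (Fin 2) ℂ)
    (hG : G = !![-Complex.exp (φ * Complex.I) *
                    (Complex.exp (φ * Complex.I) * (Real.sin θ : ℂ) ^ 2 + (Real.cos θ : ℂ) ^ 2),
                  (1 - Complex.exp (φ * Complex.I)) * (Real.sin θ : ℂ) * (Real.cos θ : ℂ);
                  Complex.exp (φ * Complex.I) * (1 - Complex.exp (φ * Complex.I)) *
                    (Real.sin θ : ℂ) * (Real.cos θ : ℂ),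
                  -Complex.exp (φ * Complex.I) * (Real.cos θ : ℂ) ^ 2 - (Real.sin θ : ℂ) ^ 2])
    (v : Fin 2 → ℂ) (hv : v = ![(Real.sin θ : ℂ), (Real.cos θ : ℂ)]) :
    ∀ k : ℕ, ((G ^ k).mulVec v) 0 =
      ((Real.sin θ / Real.sin δ : ℝ) : ℂ) * (-1 : ℂ) ^ k *
        Complex.exp (((k : ℂ) - 1) * (φ : ℂ) * Complex.I) *
        (Complex.exp (φ * Complex.I) * ((Real.sin (((k : ℝ) + 1) * δ) : ℝ) : ℂ) -
          ((Real.sin ((k : ℝ) * δ) : ℝ) : ℂ)) := by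
  obtain ⟨hl0, hl1⟩ := hlam
  obtain ⟨hφ0, hφπ⟩ := hφ
  -- basic trig facts
  have hsθ : Real.sin θ = Real.sqrt lam := by
    rw [hθ, Real.sin_arcsin (le_trans (by norm_num) (Real.sqrt_nonneg _)) (by
      rw [show (1:ℝ) = Real.sqrt 1 by simp]
      exact Real.sqrt_le_sqrt hl1.le)]
  have hs2 : Real.sin θ ^ 2 = lam := by rw [hsθ, Real.sq_sqrt hl0.le]
  have hc2 : Real.cos θ ^ 2 = 1 - lam := by
    have := Real.sin_sq_add_cos_sq θ; linarith
  have hcosφ1 : Real.cos φ < 1 := by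
    have := Real.strictAntiOn_cos (Set.mem_Icc.2 ⟨le_refl 0, Real.pi_pos.le⟩)
      (Set.mem_Icc.2 ⟨hφ0.le, hφπ⟩) hφ0
    simpa using this
  have hcosφ2 : -1 ≤ Real.cos φ := Real.neg_one_le_cos φ
  have hx1 : (-1:ℝ) < 1 - lam * (1 - Real.cos φ) := by nlinarith
  have hx2 : 1 - lam * (1 - Real.cos φ) < 1 := by nlinarith
  have hcosδ : Real.cos δ = 1 - lam * (1 - Real.cos φ) := by
    rw [hδ, Real.cos_arccos hx1.le hx2.le]
  have hsinδ : 0 < Real.sin δ := by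
    rw [hδ, Real.sin_arccos]
    have h : (1 - lam * (1 - Real.cos φ)) ^ 2 < 1 := by nlinarith
    exact Real.sqrt_pos.2 (by linarith)
  have hsδne : ((Real.sin δ : ℝ) : ℂ) ≠ 0 := by
    exact_mod_cast Complex.ofReal_ne_zero.2 hsinδ.ne'
  have hqR : Real.cos δ = Real.cos θ ^ 2 + Real.sin θ ^ 2 * Real.cos φ := by
    rw [hcosδ, hc2, hs2]; ring
  have hq : ((Real.cos δ : ℝ) : ℂ) =
      ((Real.cos θ : ℝ) : ℂ) ^ 2 + ((Real.sin θ : ℝ) : ℂ) ^ 2 * ((Real.cos φ : ℝ) : ℂ) := by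
    exact_mod_cast congrArg (Complex.ofReal) hqR
  have h1c : ((Real.sin θ : ℝ) : ℂ) ^ 2 + ((Real.cos θ : ℝ) : ℂ) ^ 2 = 1 := by
    exact_mod_cast congrArg (Complex.ofReal) (Real.sin_sq_add_cos_sq θ)
  have heI : Complex.exp ((φ : ℂ) * Complex.I) =
      ((Real.cos φ : ℝ) : ℂ) + ((Real.sin φ : ℝ) : ℂ) * Complex.I := by
    rw [Complex.exp_mul_I, Complex.ofReal_cos, Complex.ofReal_sin]
  have h2c : ((Real.sin φ : ℝ) : ℂ) ^ 2 + ((Real.cos φ : ℝ) : ℂ) ^ 2 = 1 := by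
    exact_mod_cast congrArg (Complex.ofReal) (Real.sin_sq_add_cos_sq φ)
  have he2 : Complex.exp ((φ : ℂ) * Complex.I) ^ 2 + 1 =
      2 * ((Real.cos φ : ℝ) : ℂ) * Complex.exp ((φ : ℂ) * Complex.I) := by
    rw [heI]
    linear_combination ((Real.sin φ : ℝ) : ℂ) ^ 2 * Complex.I_sq - h2c
  -- the key matrix identity  G·G = (-2 e cos δ) • G + (-e²) • 1
  have hM : G * G = (-2 * Complex.exp ((φ : ℂ) * Complex.I) * ((Real.cos δ : ℝ) : ℂ)) • G
      + (-(Complex.exp ((φ : ℂ) * Complex.I)) ^ 2) • (1 : Matrix (Fin 2) (Fin 2) ℂ) := by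
    subst hG
    ext i j
    fin_cases i <;> fin_cases j <;>
      simp [Matrix.mul_apply, Fin.sum_univ_two, Matrix.smul_apply, Matrix.one_apply, -Complex.ofReal_sin, -Complex.ofReal_cos] <;>
      set e := Complex.exp ((φ : ℂ) * Complex.I) with hedef <;>
      set s := ((Real.sin θ : ℝ) : ℂ) with hsdef <;>
      set c := ((Real.cos θ : ℝ) : ℂ) with hcdef
    · linear_combination (-2*e^2*(e*s^2+c^2)) * hq + (e*(e*s^2+c^2)*s^2) * he2
        + (-(e^2)*(s^2+c^2+1)) * h1c
    · linear_combination (2*e*((1-e)*s*c)) * hq + (-(s^2)*((1-e)*s*c)) * he2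
    · linear_combination (2*e*(e*(1-e)*s*c)) * hq + (-(s^2)*(e*(1-e)*s*c)) * he2
    · linear_combination (-2*e*(e*c^2+s^2)) * hq + ((e*c^2+s^2)*s^2) * he2
        + (-(e^2)*(s^2+c^2+1)) * h1c
  -- casted helper for the normalization constant
  have hC : ((Real.sin θ / Real.sin δ : ℝ) : ℂ) * ((Real.sin δ : ℝ) : ℂ) = ((Real.sin θ : ℝ) : ℂ) := by
    rw [Complex.ofReal_div]
    exact div_mul_cancel₀ _ hsδne
  intro k
  induction k using Nat.twoStepInduction with
  | zero =>
    rw [pow_zero, Matrix.one_mulVec, hv]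
    have hee : Complex.exp ((((0:ℕ):ℂ) - 1) * (φ:ℂ) * Complex.I) * Complex.exp ((φ:ℂ) * Complex.I) = 1 := by
      rw [← Complex.exp_add, show (((0:ℕ):ℂ) - 1) * (φ:ℂ) * Complex.I + (φ:ℂ) * Complex.I = 0 by push_cast; ring, Complex.exp_zero]
    simp only [Matrix.cons_val_zero, pow_zero, mul_one, one_mul]
    rw [show ((0:ℕ):ℝ) * δ = 0 by push_cast; ring, Real.sin_zero,
        show (((0:ℕ):ℝ) + 1) * δ = δ by push_cast; ring, Complex.ofReal_zero, sub_zero]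
    linear_combination (-(((Real.sin θ / Real.sin δ : ℝ):ℂ) * ((Real.sin δ : ℝ):ℂ))) * hee - hC
  | one =>
    have hE0 : Complex.exp ((((1:ℕ):ℂ) - 1) * (φ:ℂ) * Complex.I) = 1 := by
      rw [show (((1:ℕ):ℂ) - 1) * (φ:ℂ) * Complex.I = 0 by push_cast; ring, Complex.exp_zero]
    have h2d : ((Real.sin ((((1:ℕ):ℝ) + 1) * δ) : ℝ) : ℂ) =
        2 * ((Real.sin δ : ℝ) : ℂ) * ((Real.cos δ : ℝ) : ℂ) := by
      rw [show (((1:ℕ):ℝ) + 1) * δ = 2 * δ by push_cast; ring, Real.sin_two_mul]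
      push_cast; ring
    have h1d : ((1:ℕ):ℝ) * δ = δ := by push_cast; ring
    rw [pow_one, hG, hv, hE0, h2d, h1d]
    simp only [Matrix.mulVec, dotProduct, Fin.sum_univ_two, Matrix.cons_val',
      Matrix.cons_val_zero, Matrix.cons_val_one, Matrix.head_cons, Matrix.empty_val',
      Matrix.cons_val_fin_one, Matrix.head_fin_const, Matrix.of_apply, pow_one, mul_one]
    linear_combination (2 * Complex.exp ((φ:ℂ) * Complex.I) * ((Real.cos δ : ℝ):ℂ) - 1) * hC
      + 2 * Complex.exp ((φ:ℂ) * Complex.I) * ((Real.sin θ : ℝ):ℂ) * hq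
      - ((Real.sin θ : ℝ):ℂ) ^ 3 * he2 + ((Real.sin θ : ℝ):ℂ) * h1c
  | more n ih1 ih2 =>
    have hp : G ^ (n+2) = (G * G) * G ^ n := by
      rw [show n + 2 = 2 + n by omega, pow_add, pow_two]
    rw [hp, ← Matrix.mulVec_mulVec, hM, Matrix.add_mulVec, Matrix.smul_mulVec,
      Matrix.smul_mulVec, Matrix.one_mulVec, Matrix.mulVec_mulVec, ← pow_succ']
    simp only [Pi.add_apply, Pi.smul_apply, smul_eq_mul]
    rw [ih1, ih2]
    have hE1 : Complex.exp ((((n+1:ℕ):ℂ) - 1) * (φ:ℂ) * Complex.I)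
        = Complex.exp ((((n:ℕ):ℂ) - 1) * (φ:ℂ) * Complex.I) * Complex.exp ((φ:ℂ) * Complex.I) := by
      rw [← Complex.exp_add]; congr 1; push_cast; ring
    have hE2 : Complex.exp ((((n+2:ℕ):ℂ) - 1) * (φ:ℂ) * Complex.I)
        = Complex.exp ((((n:ℕ):ℂ) - 1) * (φ:ℂ) * Complex.I) * Complex.exp ((φ:ℂ) * Complex.I)
          * Complex.exp ((φ:ℂ) * Complex.I) := by
      rw [← Complex.exp_add, ← Complex.exp_add]; congr 1; push_cast; ring
    have r1R : Real.sin ((((n+2:ℕ):ℝ) + 1) * δ)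
        = 2 * Real.cos δ * Real.sin ((((n+1:ℕ):ℝ) + 1) * δ) - Real.sin ((((n:ℕ):ℝ) + 1) * δ) := by
      have h := sin_two_step δ ((((n+1:ℕ):ℝ) + 1) * δ)
      rw [show (((n+1:ℕ):ℝ) + 1) * δ + δ = (((n+2:ℕ):ℝ) + 1) * δ by push_cast; ring,
          show (((n+1:ℕ):ℝ) + 1) * δ - δ = (((n:ℕ):ℝ) + 1) * δ by push_cast; ring] at h
      linarith
    have r2R : Real.sin (((n+2:ℕ):ℝ) * δ)
        = 2 * Real.cos δ * Real.sin (((n+1:ℕ):ℝ) * δ) - Real.sin (((n:ℕ):ℝ) * δ) := by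
      have h := sin_two_step δ (((n+1:ℕ):ℝ) * δ)
      rw [show ((n+1:ℕ):ℝ) * δ + δ = ((n+2:ℕ):ℝ) * δ by push_cast; ring,
          show ((n+1:ℕ):ℝ) * δ - δ = ((n:ℕ):ℝ) * δ by push_cast; ring] at h
      linarith
    have r1 : ((Real.sin ((((n+2:ℕ):ℝ) + 1) * δ) : ℝ) : ℂ)
        = 2 * ((Real.cos δ : ℝ) : ℂ) * ((Real.sin ((((n+1:ℕ):ℝ) + 1) * δ) : ℝ) : ℂ)
          - ((Real.sin ((((n:ℕ):ℝ) + 1) * δ) : ℝ) : ℂ) := by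
      rw [r1R]; push_cast; ring
    have r2 : ((Real.sin (((n+2:ℕ):ℝ) * δ) : ℝ) : ℂ)
        = 2 * ((Real.cos δ : ℝ) : ℂ) * ((Real.sin (((n+1:ℕ):ℝ) * δ) : ℝ) : ℂ)
          - ((Real.sin (((n:ℕ):ℝ) * δ) : ℝ) : ℂ) := by
      rw [r2R]; push_cast; ring
    rw [hE1, hE2, r1, r2]
    ring
end

section
/- Fix an integer k ≥ 1 and φ ∈ (0,π], and for 1 ≤ j ≤ k set λ_{k,j}^{φ,max} = (1 − cos((2j−1)π/(2k+1)))/(1 − cos φ). Then λ_{k,j}^{φ,max} is strictly increasing in j, and for every j with 1 ≤ j ≤ k such that λ_{k,j}^{φ,max} < 1, one has P_k^φ(λ_{k,j}^{φ,max}) = 1. -/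
/-- The success probability `P_k^φ(λ)` of the matched-phase Grover algorithm after
`k` iterations: `P_k^φ(λ) = A·cos((2k+1)δ) + B` where `θ = arcsin √λ`,
`δ = arccos (1 − λ(1 − cos φ))`, `A = (sin²θ/sin²δ)(cos φ − cos δ)` and
`B = (sin²θ/sin²δ)(1 − cos φ·cos δ)`. -/
noncomputable def grovP (k : ℕ) (φ lam : ℝ) : ℝ :=
  let θ : ℝ := Real.arcsin (Real.sqrt lam)
  let δ : ℝ := Real.arccos (1 - lam * (1 - Real.cos φ))
  let A : ℝ := Real.sin θ ^ 2 / Real.sin δ ^ 2 * (Real.cos φ - Real.cos δ)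
  let B : ℝ := Real.sin θ ^ 2 / Real.sin δ ^ 2 * (1 - Real.cos φ * Real.cos δ)
  A * Real.cos ((2 * (k : ℝ) + 1) * δ) + B

/-- `φ_k^min = arccos(1 − (2 − 2cos(π/(2k+1)))/(1 − cos(π/(2k−1))))`. -/
noncomputable def phiMin (k : ℕ) : ℝ :=
  Real.arccos (1 - (2 - 2 * Real.cos (Real.pi / (2 * (k : ℝ) + 1))) /
    (1 - Real.cos (Real.pi / (2 * (k : ℝ) - 1))))

/-!
Put `α_j = (2j − 1)π/(2k + 1) ∈ (0, π)`. Then `λ_j (1 − cos φ) = 1 − cos α_j`, so the angle `δ`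
at `λ_j` is `α_j`, and monotonicity in `j` is that of `1 − cos` on `[0, π]`. Since `(2k + 1) α_j`
is an odd multiple of `π`, `P = B − A = sin²θ (1 − cos φ)(1 + cos δ) / sin² δ`, and `sin²θ = λ_j`
turns this into `(1 − cos δ)(1 + cos δ) / sin² δ = 1`.
-/

open Real Set

theorem grovP_eq_one_of_cos_eq_neg_one {k : ℕ} {φ lam α : ℝ} (hα : α ∈ Ioo 0 π)
    (hlam : lam ∈ Icc 0 1) (hδ : 1 - lam * (1 - cos φ) = cos α)
    (hres : cos ((2 * (k : ℝ) + 1) * α) = -1) : grovP k φ lam = 1 := by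
  have hθ : sin (arcsin (√lam)) ^ 2 = lam := by
    rw [sin_arcsin (by linarith [sqrt_nonneg lam]) (sqrt_le_one.mpr hlam.2), sq_sqrt hlam.1]
  have hsin : sin α ^ 2 ≠ 0 := (pow_pos (sin_pos_of_pos_of_lt_pi hα.1 hα.2) 2).ne'
  simp only [grovP, hδ, arccos_cos hα.1.le hα.2.le, hθ, hres]
  field_simp
  rw [div_eq_one_iff_eq hsin]
  linear_combination -(1 + cos α) * hδ - sin_sq_add_cos_sq α

noncomputable def maxAngle (k j : ℕ) : ℝ := (2 * (j : ℝ) - 1) * π / (2 * (k : ℝ) + 1)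

theorem maxAngle_strictMono (k : ℕ) : StrictMono (maxAngle k) := by
  intro i j hij
  unfold maxAngle
  gcongr

theorem maxAngle_mem_Ioo {k j : ℕ} (hj : 1 ≤ j) (hjk : j ≤ k) : maxAngle k j ∈ Ioo 0 π := by
  have hj' : (1 : ℝ) ≤ j := by exact_mod_cast hj
  have hjk' : (j : ℝ) ≤ k := by exact_mod_cast hjk
  unfold maxAngle
  constructor
  · have : 0 < 2 * (j : ℝ) - 1 := by linarith
    positivity
  · rw [div_lt_iff₀ (by positivity)]
    nlinarith [pi_pos]

theorem cos_mul_maxAngle (k j : ℕ) : cos ((2 * (k : ℝ) + 1) * maxAngle k j) = -1 := by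
  rw [maxAngle, mul_div_cancel₀ _ (by positivity), ← cos_nat_mul_two_pi_sub_pi j]
  ring_nf

theorem local_maximum_points_increasing_and_unit_probability_general
    (k : ℕ) (φ : ℝ) (hφ : φ ∈ Set.Ioc 0 Real.pi)
    (lamMax : ℕ → ℝ)
    (hlamMax : ∀ j : ℕ, lamMax j =
      (1 - Real.cos ((2 * (j : ℝ) - 1) * Real.pi / (2 * (k : ℝ) + 1))) / (1 - Real.cos φ)) :
    (∀ i j : ℕ, 1 ≤ i → i < j → j ≤ k → lamMax i < lamMax j) ∧
    (∀ j : ℕ, 1 ≤ j → j ≤ k → lamMax j < 1 → grovP k φ (lamMax j) = 1) := by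
  have hcosφ : 0 < 1 - cos φ := by
    have := strictAntiOn_cos ⟨le_rfl, pi_pos.le⟩ (Ioc_subset_Icc_self hφ) hφ.1
    rw [cos_zero] at this
    linarith
  have hlamMax' (j : ℕ) : lamMax j = (1 - cos (maxAngle k j)) / (1 - cos φ) := hlamMax j
  refine ⟨fun i j hi hij hjk => ?_, fun j hj hjk hlt => ?_⟩
  · rw [hlamMax', hlamMax']
    gcongr
    exact strictAntiOn_cos (Ioo_subset_Icc_self (maxAngle_mem_Ioo hi (hij.le.trans hjk)))
      (Ioo_subset_Icc_self (maxAngle_mem_Ioo (hi.trans hij.le) hjk)) (maxAngle_strictMono k hij)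
  · have hnonneg : 0 ≤ lamMax j := by
      rw [hlamMax']
      exact div_nonneg (by linarith [cos_le_one (maxAngle k j)]) hcosφ.le
    refine grovP_eq_one_of_cos_eq_neg_one (maxAngle_mem_Ioo hj hjk) ⟨hnonneg, hlt.le⟩ ?_ (cos_mul_maxAngle k j)
    rw [hlamMax', div_mul_cancel₀ _ hcosφ.ne']
    ring

/-- For k ≥ 1 and φ ∈ (0,π], the points
λ_{k,j}^{φ,max} = (1 − cos((2j−1)π/(2k+1)))/(1 − cos φ), 1 ≤ j ≤ k, are strictly
increasing in j, and whenever λ_{k,j}^{φ,max} < 1 one has P_k^φ(λ_{k,j}^{φ,max}) = 1. -/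
theorem local_maximum_points_increasing_and_unit_probability
    (k : ℕ) (hk : 1 ≤ k) (φ : ℝ) (hφ : φ ∈ Set.Ioc 0 Real.pi)
    (lamMax : ℕ → ℝ)
    (hlamMax : ∀ j : ℕ, lamMax j =
      (1 - Real.cos ((2 * (j : ℝ) - 1) * Real.pi / (2 * (k : ℝ) + 1))) / (1 - Real.cos φ)) :
    (∀ i j : ℕ, 1 ≤ i → i < j → j ≤ k → lamMax i < lamMax j) ∧
    (∀ j : ℕ, 1 ≤ j → j ≤ k → lamMax j < 1 → grovP k φ (lamMax j) = 1) :=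
  local_maximum_points_increasing_and_unit_probability_general k φ hφ lamMax hlamMax
end

section
/- Fix an integer k ≥ 1 and φ ∈ (0,π). Then for every λ₀ ∈ (0,1), the function λ ↦ P_k^φ(λ) has derivative at λ₀ equal to (1 + cos δ)^{−2} · [ (1 + cos φ)(1 + cos((2k+1)δ)) − (2k+1)(cos φ − cos δ)(1 + cos δ)·sin((2k+1)δ)/sin δ ], where δ = arccos(1 − λ₀(1 − cos φ)). -/
open Real Set

noncomputable def grovDelta (φ lam : ℝ) : ℝ := arccos (1 - lam * (1 - cos φ))

section

variable {φ lam : ℝ}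

lemma one_sub_mul_one_sub_cos_mem_Ioo (hφ : cos φ < 1) (hlam : lam ∈ Ioo 0 1) :
    1 - lam * (1 - cos φ) ∈ Ioo (-1) 1 := by
  obtain ⟨h0, h1⟩ := hlam
  have := neg_one_le_cos φ
  constructor <;> nlinarith

lemma cos_grovDelta (hφ : cos φ < 1) (hlam : lam ∈ Ioo 0 1) :
    cos (grovDelta φ lam) = 1 - lam * (1 - cos φ) :=
  have hu := one_sub_mul_one_sub_cos_mem_Ioo hφ hlam
  cos_arccos hu.1.le hu.2.le

lemma sin_grovDelta_pos (hφ : cos φ < 1) (hlam : lam ∈ Ioo 0 1) :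
    0 < sin (grovDelta φ lam) :=
  have hu := one_sub_mul_one_sub_cos_mem_Ioo hφ hlam
  sin_pos_of_pos_of_lt_pi (arccos_pos.2 hu.2) (arccos_lt_pi.2 hu.1)

lemma hasDerivAt_grovDelta (hφ : cos φ < 1) (hlam : lam ∈ Ioo 0 1) :
    HasDerivAt (grovDelta φ) ((1 - cos φ) / sin (grovDelta φ lam)) lam := by
  have hu := one_sub_mul_one_sub_cos_mem_Ioo hφ hlam
  have hinner : HasDerivAt (fun l : ℝ => 1 - l * (1 - cos φ)) (-(1 - cos φ)) lam := by
    simpa using ((hasDerivAt_id' lam).mul_const (1 - cos φ)).const_sub 1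
  refine ((hasDerivAt_arccos hu.1.ne' hu.2.ne).comp lam hinner).congr_deriv ?_
  rw [grovDelta, sin_arccos]
  ring

lemma grovP_eq_div (k : ℕ) (hφ : cos φ < 1) (hlam : lam ∈ Ioo 0 1) :
    grovP k φ lam = ((lam - 1) * cos ((2 * k + 1) * grovDelta φ lam) + 1 + lam * cos φ) /
      (2 - lam * (1 - cos φ)) := by
  obtain ⟨h0, h1⟩ := hlam
  have hsinθ : sin (arcsin √lam) ^ 2 = lam := by
    rw [sin_arcsin (by linarith [sqrt_nonneg lam]) (sqrt_le_one.2 h1.le), sq_sqrt h0.le]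
  have hcosδ := cos_grovDelta hφ ⟨h0, h1⟩
  have hsinδ : sin (grovDelta φ lam) ^ 2 = lam * (1 - cos φ) * (2 - lam * (1 - cos φ)) := by
    rw [sin_sq, hcosδ]
    ring
  have hsinδ0 := (sin_grovDelta_pos hφ ⟨h0, h1⟩).ne'
  have hden : 2 - lam * (1 - cos φ) ≠ 0 := by nlinarith [neg_one_le_cos φ]
  have hc : 1 - cos φ ≠ 0 := by linarith
  change sin (arcsin √lam) ^ 2 / sin (grovDelta φ lam) ^ 2 * (cos φ - cos (grovDelta φ lam)) *
      cos ((2 * k + 1) * grovDelta φ lam) +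
    sin (arcsin √lam) ^ 2 / sin (grovDelta φ lam) ^ 2 * (1 - cos φ * cos (grovDelta φ lam)) = _
  rw [hsinθ, hsinδ, hcosδ]
  field_simp
  ring

end

theorem derivative_of_success_probability_general
    (k : ℕ) (φ : ℝ) (hφ : φ ∈ Set.Ioo 0 Real.pi)
    (lam₀ : ℝ) (hlam₀ : lam₀ ∈ Set.Ioo (0 : ℝ) 1)
    (δ : ℝ) (hδ : δ = Real.arccos (1 - lam₀ * (1 - Real.cos φ))) :
    HasDerivAt (fun lam => grovP k φ lam)
      ((1 + Real.cos δ) ^ (-2 : ℤ) *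
        ((1 + Real.cos φ) * (1 + Real.cos ((2 * (k : ℝ) + 1) * δ)) -
          (2 * (k : ℝ) + 1) * (Real.cos φ - Real.cos δ) * (1 + Real.cos δ) *
            (Real.sin ((2 * (k : ℝ) + 1) * δ) / Real.sin δ)))
      lam₀ := by
  obtain rfl : δ = grovDelta φ lam₀ := hδ
  have hcos : cos φ < 1 := by
    simpa using cos_lt_cos_of_nonneg_of_le_pi le_rfl hφ.2.le hφ.1
  set δ := grovDelta φ lam₀
  set m : ℝ := 2 * k + 1
  have hnum : HasDerivAt (fun l => (l - 1) * cos (m * grovDelta φ l) + 1 + l * cos φ)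
      (cos (m * δ) - (lam₀ - 1) * sin (m * δ) * (m * ((1 - cos φ) / sin δ)) + cos φ) lam₀ := by
    refine ((((hasDerivAt_id' lam₀).sub_const 1).mul
      ((hasDerivAt_grovDelta hcos hlam₀).const_mul m).cos).add_const 1).add
      ((hasDerivAt_id' lam₀).mul_const (cos φ)) |>.congr_deriv ?_
    ring
  have hden : HasDerivAt (fun l => 2 - l * (1 - cos φ)) (-(1 - cos φ)) lam₀ := by
    simpa using ((hasDerivAt_id' lam₀).mul_const (1 - cos φ)).const_sub 2
  have hden0 : 2 - lam₀ * (1 - cos φ) ≠ 0 := by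
    nlinarith [neg_one_le_cos φ, hlam₀.1, hlam₀.2]
  refine ((hnum.div hden hden0).congr_of_eventuallyEq <|
    Filter.eventuallyEq_of_mem (Ioo_mem_nhds hlam₀.1 hlam₀.2) fun l hl =>
      grovP_eq_div k hcos hl).congr_deriv ?_
  have hsinδ : sin δ ≠ 0 := (sin_grovDelta_pos hcos hlam₀).ne'
  have hcosδ : 1 + cos δ = 2 - lam₀ * (1 - cos φ) := by
    rw [cos_grovDelta hcos hlam₀]
    ring
  rw [hcosδ, cos_grovDelta hcos hlam₀, zpow_neg, zpow_two]
  field_simp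
  ring

/-- For k ≥ 1 and φ ∈ (0,π), at every λ₀ ∈ (0,1) the function
λ ↦ P_k^φ(λ) has derivative
(1 + cos δ)⁻² · [(1 + cos φ)(1 + cos((2k+1)δ))
  − (2k+1)(cos φ − cos δ)(1 + cos δ)·sin((2k+1)δ)/sin δ],
where δ = arccos(1 − λ₀(1 − cos φ)). -/
theorem derivative_of_success_probability
    (k : ℕ) (hk : 1 ≤ k) (φ : ℝ) (hφ : φ ∈ Set.Ioo 0 Real.pi)
    (lam₀ : ℝ) (hlam₀ : lam₀ ∈ Set.Ioo (0 : ℝ) 1)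
    (δ : ℝ) (hδ : δ = Real.arccos (1 - lam₀ * (1 - Real.cos φ))) :
    HasDerivAt (fun lam => grovP k φ lam)
      ((1 + Real.cos δ) ^ (-2 : ℤ) *
        ((1 + Real.cos φ) * (1 + Real.cos ((2 * (k : ℝ) + 1) * δ)) -
          (2 * (k : ℝ) + 1) * (Real.cos φ - Real.cos δ) * (1 + Real.cos δ) *
            (Real.sin ((2 * (k : ℝ) + 1) * δ) / Real.sin δ)))
      lam₀ :=
  derivative_of_success_probability_general k φ hφ lam₀ hlam₀ δ hδ
end

section
/- Fix an integer k ≥ 1 and φ ∈ (0,π]. A point λ₀ ∈ (0,1) is a local maximum point of the function λ ↦ P_k^φ(λ) on (0,1) if and only if there exists an integer j with 1 ≤ j ≤ k such that λ₀ = (1 − cos((2j−1)π/(2k+1)))/(1 − cos φ). -/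
/-! Substitute the half-angle x = δ/2 ∈ (0, φ/2), so that λ = (1 - cos 2x)/(1 - cos φ). Then
`1 - P_k^φ(λ) = (cos 2x - cos φ) cos²((2k+1)x) / ((1 - cos φ) cos² x) ≥ 0`, so `P ≤ 1`, with
equality exactly at the zeros of `cos((2k+1)x)`, which are the points `λ_{k,j}`. Away from these
zeros `log (1 - P)` is strictly concave in `x`: its derivative
`-2(1 + cos φ) tan x/(cos 2x - cos φ) - 2(2k+1) tan((2k+1)x)` is strictly decreasing. A strictly
concave function has no local minimum, so `P` has no other local maxima. -/

open Real Set Filter Topology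

lemma StrictConcaveOn.not_isLocalMin {s : Set ℝ} {f : ℝ → ℝ} {x : ℝ}
    (hf : StrictConcaveOn ℝ s f) (hs : s ∈ 𝓝 x) : ¬ IsLocalMin f x := by
  intro hmin
  obtain ⟨ε, hε, hball⟩ := Metric.eventually_nhds_iff.mp (hmin.and hs)
  have hmem : ∀ t, |t| < ε → f x ≤ f (x + t) ∧ x + t ∈ s := fun t ht =>
    hball (by rwa [Real.dist_eq, add_sub_cancel_left])
  obtain ⟨hle₁, hmem₁⟩ := hmem (-(ε / 2)) (by rw [abs_neg, abs_of_pos (half_pos hε)]; linarith)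
  obtain ⟨hle₂, hmem₂⟩ := hmem (ε / 2) (by rw [abs_of_pos (half_pos hε)]; linarith)
  have hlt := hf.2 hmem₁ hmem₂ (by linarith) one_half_pos one_half_pos (add_halves 1)
  rw [smul_eq_mul, smul_eq_mul, smul_eq_mul, smul_eq_mul,
    show 1 / 2 * (x + -(ε / 2)) + 1 / 2 * (x + ε / 2) = x by ring] at hlt
  linarith

lemma strictMonoOn_tan_mul {m : ℝ} (hm : 0 < m) {s : Set ℝ} (hs : Convex ℝ s)
    (hcos : ∀ x ∈ s, cos (m * x) ≠ 0) : StrictMonoOn (fun x => tan (m * x)) s := by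
  have hderiv : ∀ x ∈ s, HasDerivAt (fun x => tan (m * x)) (1 / cos (m * x) ^ 2 * m) x :=
    fun x hx => by
      simpa [Function.comp_def] using
        (hasDerivAt_tan (hcos x hx)).comp x ((hasDerivAt_id x).const_mul m)
  refine strictMonoOn_of_deriv_pos hs (fun x hx => (hderiv x hx).continuousAt.continuousWithinAt)
    fun x hx => ?_
  rw [(hderiv x (interior_subset hx)).deriv]
  exact mul_pos (by simpa using pow_two_pos_of_ne_zero (hcos x (interior_subset hx))) hm

lemma cos_odd_mul_eq_zero_iff (k : ℕ) {x : ℝ} (hx : x ∈ Ioo 0 (π / 2)) :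
    cos ((2 * k + 1) * x) = 0 ↔
      ∃ j : ℕ, 1 ≤ j ∧ j ≤ k ∧ 2 * x = (2 * (j : ℝ) - 1) * π / (2 * k + 1) := by
  have hm : (0 : ℝ) < 2 * k + 1 := by positivity
  rw [cos_eq_zero_iff]
  constructor
  · rintro ⟨n, hn⟩
    have hx' : 2 * x = (2 * n + 1) * π / (2 * k + 1) := by
      field_simp
      linarith
    have hn0 : 0 ≤ n := by
      have : (-1 : ℝ) < n := by nlinarith [hx.1, pi_pos]
      exact_mod_cast this
    lift n to ℕ using hn0
    push_cast at hn hx'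
    have hlt : (2 * n + 1) * π < (2 * k + 1) * π := by
      linarith [mul_lt_mul_of_pos_left hx.2 hm]
    have hnk : (n : ℝ) < k := by linarith [lt_of_mul_lt_mul_right hlt pi_pos.le]
    refine ⟨n + 1, by omega, by exact_mod_cast hnk, ?_⟩
    rw [hx']
    push_cast
    ring
  · rintro ⟨j, hj1, hjk, hj⟩
    refine ⟨j - 1, ?_⟩
    push_cast
    field_simp at hj ⊢
    linarith

noncomputable def grovDefect (m φ x : ℝ) : ℝ :=
  (cos (2 * x) - cos φ) * cos (m * x) ^ 2 / cos x ^ 2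

noncomputable def lamOfHalfAngle (φ x : ℝ) : ℝ :=
  (1 - cos (2 * x)) / (1 - cos φ)

lemma grovP_eq {k : ℕ} {φ lam : ℝ} (hφ : cos φ < 1) (hlam : lam ∈ Ioo 0 1) :
    grovP k φ lam = 1 - (1 - lam) * (1 + cos ((2 * k + 1) * arccos (1 - lam * (1 - cos φ)))) /
      (1 + (1 - lam * (1 - cos φ))) := by
  obtain ⟨h0, h1⟩ := hlam
  have hφ' := neg_one_le_cos φ
  have hc1 : -1 < 1 - lam * (1 - cos φ) := by nlinarith
  have hc2 : 1 - lam * (1 - cos φ) < 1 := by nlinarith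
  have hsqrt : sqrt lam ≤ 1 := sqrt_le_one.mpr h1.le
  simp only [grovP]
  rw [sin_arcsin (by linarith [sqrt_nonneg lam]) hsqrt, sq_sqrt h0.le, sin_sq,
    cos_arccos hc1.le hc2.le]
  have hd1 : 1 - (1 - lam * (1 - cos φ)) ^ 2 ≠ 0 := by nlinarith
  have hd2 : 1 + (1 - lam * (1 - cos φ)) ≠ 0 := by linarith
  field_simp
  ring

section HalfAngle

variable {φ x : ℝ}

lemma cos_lt_cos_two_mul_of_mem_Ioo (hφ : φ ≤ π) (hx : x ∈ Ioo 0 (φ / 2)) : cos φ < cos (2 * x) :=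
  cos_lt_cos_of_nonneg_of_le_pi (by linarith [hx.1]) hφ (by linarith [hx.2])

lemma cos_pos_of_mem_Ioo_half_angle (hφ : φ ≤ π) (hx : x ∈ Ioo 0 (φ / 2)) : 0 < cos x :=
  cos_pos_of_mem_Ioo ⟨by linarith [hx.1, pi_pos], by linarith [hx.2]⟩

lemma mapsTo_lamOfHalfAngle (hφ : φ ≤ π) :
    MapsTo (lamOfHalfAngle φ) (Ioo 0 (φ / 2)) (Ioo 0 1) := by
  intro x hx
  have hlt : cos (2 * x) < 1 := by
    simpa using cos_lt_cos_of_nonneg_of_le_pi le_rfl (by linarith [hx.2]) (by linarith [hx.1])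
  have hφx := cos_lt_cos_two_mul_of_mem_Ioo hφ hx
  exact ⟨div_pos (by linarith) (by linarith), (div_lt_one (by linarith)).mpr (by linarith)⟩

lemma surjOn_lamOfHalfAngle (hφ : φ ∈ Ioc 0 π) :
    SurjOn (lamOfHalfAngle φ) (Ioo 0 (φ / 2)) (Ioo 0 1) := by
  intro lam ⟨h0, h1⟩
  have hφ1 : 0 < 1 - cos φ := by
    simpa using cos_lt_cos_of_nonneg_of_le_pi le_rfl hφ.2 hφ.1
  set c := 1 - lam * (1 - cos φ)
  have hc1 : cos φ < c := by nlinarith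
  have hc2 : c < 1 := by nlinarith
  refine ⟨arccos c / 2, ⟨by linarith [arccos_pos.mpr hc2], ?_⟩, ?_⟩
  · have := arccos_lt_arccos (neg_one_le_cos φ) hc1 hc2.le
    rw [arccos_cos hφ.1.le hφ.2] at this
    linarith
  · rw [lamOfHalfAngle, mul_div_cancel₀ _ two_ne_zero, cos_arccos (by linarith [neg_one_le_cos φ])
      hc2.le]
    field_simp
    ring

lemma continuous_lamOfHalfAngle : Continuous (lamOfHalfAngle φ) :=
  (continuous_const.sub (continuous_cos.comp (continuous_const.mul continuous_id))).div_const _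

lemma grovP_lamOfHalfAngle (k : ℕ) (hφ : φ ≤ π) (hx : x ∈ Ioo 0 (φ / 2)) :
    grovP k φ (lamOfHalfAngle φ x) = 1 - grovDefect (2 * k + 1) φ x / (1 - cos φ) := by
  have hφx := cos_lt_cos_two_mul_of_mem_Ioo hφ hx
  have hφ1 : cos φ < 1 := hφx.trans_le (cos_le_one _)
  have hφ1' : 1 - cos φ ≠ 0 := by linarith
  have hcx := cos_pos_of_mem_Ioo_half_angle hφ hx
  have harg : 1 - lamOfHalfAngle φ x * (1 - cos φ) = cos (2 * x) := by
    rw [lamOfHalfAngle]; field_simp; ring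
  rw [grovP_eq hφ1 (mapsTo_lamOfHalfAngle hφ hx), harg,
    arccos_cos (by linarith [hx.1]) (by linarith [hx.2]),
    show (2 * (k : ℝ) + 1) * (2 * x) = 2 * ((2 * k + 1) * x) by ring, cos_two_mul, cos_two_mul,
    grovDefect, lamOfHalfAngle]
  field_simp
  ring

lemma grovDefect_nonneg (m : ℝ) (hφ : φ ≤ π) (hx : x ∈ Ioo 0 (φ / 2)) :
    0 ≤ grovDefect m φ x :=
  div_nonneg (mul_nonneg (by linarith [cos_lt_cos_two_mul_of_mem_Ioo hφ hx]) (sq_nonneg _))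
    (sq_nonneg _)

end HalfAngle

lemma monotoneOn_tan_div_cos_two_mul_sub_cos {φ : ℝ} (hφ : φ ≤ π) :
    MonotoneOn (fun x => tan x / (cos (2 * x) - cos φ)) (Ioo 0 (φ / 2)) := by
  intro x hx y hy hxy
  have htan_nonneg : 0 ≤ tan x := tan_nonneg_of_nonneg_of_le_pi_div_two hx.1.le (by linarith [hx.2])
  have htan_le : tan x ≤ tan y := by
    rcases hxy.eq_or_lt with rfl | hlt
    · exact le_rfl
    · exact (tan_lt_tan_of_nonneg_of_lt_pi_div_two hx.1.le (by linarith [hy.2]) hlt).le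
  have hcos_le : cos (2 * y) ≤ cos (2 * x) :=
    cos_le_cos_of_nonneg_of_le_pi (by linarith [hx.1]) (by linarith [hy.2]) (by linarith)
  have hDy := cos_lt_cos_two_mul_of_mem_Ioo hφ hy
  exact div_le_div₀ (htan_nonneg.trans htan_le) htan_le (by linarith) (by linarith)

lemma hasDerivAt_log_grovDefect {m φ x : ℝ} (hcx : cos x ≠ 0) (hcmx : cos (m * x) ≠ 0)
    (hD : cos (2 * x) - cos φ ≠ 0) :
    HasDerivAt (fun y => log (grovDefect m φ y))
      (-2 * (1 + cos φ) * tan x / (cos (2 * x) - cos φ) - 2 * m * tan (m * x)) x := by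
  have hD' : HasDerivAt (fun y => cos (2 * y) - cos φ) (-sin (2 * x) * (2 * 1)) x :=
    ((hasDerivAt_id x).const_mul 2).cos.sub_const (cos φ)
  have hN : HasDerivAt (fun y => cos (m * y) ^ 2)
      ((2 : ℕ) * cos (m * x) ^ 1 * (-sin (m * x) * (m * 1))) x :=
    ((hasDerivAt_id x).const_mul m).cos.pow 2
  have hC : HasDerivAt (fun y => cos y ^ 2) ((2 : ℕ) * cos x ^ 1 * -sin x) x :=
    (hasDerivAt_cos x).pow 2
  have hW : HasDerivAt (grovDefect m φ) _ x := (hD'.mul hN).div hC (pow_ne_zero 2 hcx)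
  have hlogW := hW.log (div_ne_zero (mul_ne_zero hD (pow_ne_zero 2 hcmx)) (pow_ne_zero 2 hcx))
  refine hlogW.congr_deriv ?_
  simp only [Pi.mul_apply]
  rw [cos_two_mul] at hD
  rw [grovDefect, tan_eq_sin_div_cos, tan_eq_sin_div_cos, cos_two_mul, sin_two_mul]
  field_simp
  ring

lemma strictConcaveOn_log_grovDefect {m φ a b : ℝ} (hm : 0 < m) (hφ : φ ≤ π)
    (hab : Ioo a b ⊆ Ioo 0 (φ / 2)) (hcos : ∀ x ∈ Ioo a b, cos (m * x) ≠ 0) :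
    StrictConcaveOn ℝ (Ioo a b) (fun x => log (grovDefect m φ x)) := by
  have hderiv : ∀ x ∈ Ioo a b, HasDerivAt (fun y => log (grovDefect m φ y))
      (-2 * (1 + cos φ) * tan x / (cos (2 * x) - cos φ) - 2 * m * tan (m * x)) x :=
    fun x hx => hasDerivAt_log_grovDefect (cos_pos_of_mem_Ioo_half_angle hφ (hab hx)).ne'
      (hcos x hx)
      (sub_pos.mpr (cos_lt_cos_two_mul_of_mem_Ioo hφ (hab hx))).ne'
  refine StrictAntiOn.strictConcaveOn_of_deriv (convex_Ioo a b)
    (fun x hx => (hderiv x hx).continuousAt.continuousWithinAt) ?_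
  rw [interior_Ioo]
  intro x hx y hy hxy
  rw [(hderiv x hx).deriv, (hderiv y hy).deriv]
  have h1 : tan x / (cos (2 * x) - cos φ) ≤ tan y / (cos (2 * y) - cos φ) :=
    monotoneOn_tan_div_cos_two_mul_sub_cos hφ (hab hx) (hab hy) hxy.le
  have h2 : tan (m * x) < tan (m * y) := strictMonoOn_tan_mul hm (convex_Ioo a b) hcos hx hy hxy
  have hφ' : 0 ≤ 1 + cos φ := by linarith [neg_one_le_cos φ]
  have h3 := mul_le_mul_of_nonneg_left h1 hφ'
  simp only [mul_div_assoc] at h3 ⊢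
  nlinarith

lemma not_isLocalMin_grovDefect {m φ x₀ : ℝ} (hm : 0 < m) (hφ : φ ≤ π)
    (hx₀ : x₀ ∈ Ioo 0 (φ / 2)) (hcos : cos (m * x₀) ≠ 0) : ¬ IsLocalMin (grovDefect m φ) x₀ := by
  have hopen : IsOpen (Ioo 0 (φ / 2) ∩ {x | cos (m * x) ≠ 0}) :=
    isOpen_Ioo.inter (isOpen_ne_fun (by fun_prop) continuous_const)
  obtain ⟨ε, hε, hball⟩ := Metric.isOpen_iff.mp hopen x₀ ⟨hx₀, hcos⟩
  rw [Real.ball_eq_Ioo] at hball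
  have hconc := strictConcaveOn_log_grovDefect hm hφ (fun x hx => (hball hx).1)
    fun x hx => (hball hx).2
  have hpos : 0 < grovDefect m φ x₀ :=
    div_pos
      (mul_pos (sub_pos.mpr (cos_lt_cos_two_mul_of_mem_Ioo hφ hx₀)) (pow_two_pos_of_ne_zero hcos))
      (pow_pos (cos_pos_of_mem_Ioo_half_angle hφ hx₀) 2)
  intro hmin
  exact hconc.not_isLocalMin (Ioo_mem_nhds (by linarith) (by linarith))
    (hmin.mono fun y hy => log_le_log hpos hy)

section GroverMaxima

variable {k : ℕ} {φ x₀ : ℝ}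

lemma isLocalMin_grovDefect_of_isLocalMaxOn (hφ : φ ≤ π) (hx₀ : x₀ ∈ Ioo 0 (φ / 2))
    (h : IsLocalMaxOn (grovP k φ) (Ioo 0 1) (lamOfHalfAngle φ x₀)) :
    IsLocalMin (grovDefect (2 * k + 1) φ) x₀ := by
  have hφ1 : 0 < 1 - cos φ :=
    sub_pos.mpr ((cos_lt_cos_two_mul_of_mem_Ioo hφ hx₀).trans_le (cos_le_one _))
  have hcomp := h.comp_continuousOn (mapsTo_lamOfHalfAngle hφ)
    continuous_lamOfHalfAngle.continuousOn hx₀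
  refine IsLocalMinOn.isLocalMin ?_ (isOpen_Ioo.mem_nhds hx₀)
  filter_upwards [hcomp, self_mem_nhdsWithin] with x hx hxs
  rw [Function.comp_apply, Function.comp_apply, grovP_lamOfHalfAngle k hφ hxs,
    grovP_lamOfHalfAngle k hφ hx₀, sub_le_sub_iff_left, div_le_div_iff_of_pos_right hφ1] at hx
  exact hx

lemma grovP_le_one (hφ : φ ∈ Ioc 0 π) {lam : ℝ} (hlam : lam ∈ Ioo 0 1) : grovP k φ lam ≤ 1 := by
  obtain ⟨x, hx, rfl⟩ := surjOn_lamOfHalfAngle hφ hlam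
  rw [grovP_lamOfHalfAngle k hφ.2 hx, sub_le_self_iff]
  exact div_nonneg (grovDefect_nonneg _ hφ.2 hx) (sub_nonneg.mpr (cos_le_one φ))

lemma isLocalMaxOn_grovP_iff (hφ : φ ∈ Ioc 0 π) (hx₀ : x₀ ∈ Ioo 0 (φ / 2)) :
    IsLocalMaxOn (grovP k φ) (Ioo 0 1) (lamOfHalfAngle φ x₀) ↔ cos ((2 * k + 1) * x₀) = 0 := by
  constructor
  · intro h
    by_contra hcos
    exact not_isLocalMin_grovDefect (by positivity) hφ.2 hx₀ hcos
      (isLocalMin_grovDefect_of_isLocalMaxOn hφ.2 hx₀ h)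
  · intro hcos
    refine IsMaxOn.localize fun lam hlam => ?_
    rw [mem_ofPred_eq, grovP_lamOfHalfAngle k hφ.2 hx₀, grovDefect, hcos]
    simpa using grovP_le_one hφ hlam

end GroverMaxima

lemma lamOfHalfAngle_eq_iff {φ x δ : ℝ} (hφ : cos φ < 1) (hx : 2 * x ∈ Icc 0 π)
    (hδ : δ ∈ Icc 0 π) : lamOfHalfAngle φ x = (1 - cos δ) / (1 - cos φ) ↔ 2 * x = δ := by
  rw [lamOfHalfAngle, div_left_inj' (sub_pos.mpr hφ).ne', sub_right_inj]
  exact injOn_cos.eq_iff hx hδ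

theorem local_maximum_points_characterization_general
    (k : ℕ) (φ : ℝ) (hφ : φ ∈ Set.Ioc 0 Real.pi)
    (lam₀ : ℝ) (hlam₀ : lam₀ ∈ Set.Ioo (0 : ℝ) 1) :
    IsLocalMaxOn (grovP k φ) (Set.Ioo (0 : ℝ) 1) lam₀ ↔
      ∃ j : ℕ, 1 ≤ j ∧ j ≤ k ∧
        lam₀ = (1 - Real.cos ((2 * (j : ℝ) - 1) * Real.pi / (2 * (k : ℝ) + 1))) /
          (1 - Real.cos φ) := by
  obtain ⟨x₀, hx₀, rfl⟩ := surjOn_lamOfHalfAngle hφ hlam₀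
  have hφ1 : cos φ < 1 := by simpa using cos_lt_cos_of_nonneg_of_le_pi le_rfl hφ.2 hφ.1
  rw [isLocalMaxOn_grovP_iff hφ hx₀, cos_odd_mul_eq_zero_iff k ⟨hx₀.1, by linarith [hx₀.2, hφ.2]⟩]
  refine exists_congr fun j => and_congr_right fun hj1 => and_congr_right fun hjk => ?_
  have hj1' : (1 : ℝ) ≤ j := by exact_mod_cast hj1
  have hjk' : (j : ℝ) ≤ k := by exact_mod_cast hjk
  rw [lamOfHalfAngle_eq_iff hφ1 ⟨by linarith [hx₀.1], by linarith [hx₀.2, hφ.2]⟩]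
  refine ⟨div_nonneg (by nlinarith [pi_pos]) (by positivity), ?_⟩
  rw [div_le_iff₀ (by positivity)]
  nlinarith [pi_pos]

/-- For k ≥ 1 and φ ∈ (0,π], a point λ₀ ∈ (0,1) is a local maximum
point of λ ↦ P_k^φ(λ) on (0,1) iff λ₀ = (1 − cos((2j−1)π/(2k+1)))/(1 − cos φ)
for some integer j with 1 ≤ j ≤ k. -/
theorem local_maximum_points_characterization
    (k : ℕ) (hk : 1 ≤ k) (φ : ℝ) (hφ : φ ∈ Set.Ioc 0 Real.pi)
    (lam₀ : ℝ) (hlam₀ : lam₀ ∈ Set.Ioo (0 : ℝ) 1) :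
    IsLocalMaxOn (grovP k φ) (Set.Ioo (0 : ℝ) 1) lam₀ ↔
      ∃ j : ℕ, 1 ≤ j ∧ j ≤ k ∧
        lam₀ = (1 - Real.cos ((2 * (j : ℝ) - 1) * Real.pi / (2 * (k : ℝ) + 1))) /
          (1 - Real.cos φ) :=
  local_maximum_points_characterization_general k φ hφ lam₀ hlam₀
end

section
/- Fix an integer k ≥ 1. For every λ with sin²(π/(4k+2)) ≤ λ < 1, there exists a phase φ ∈ (0,π] such that P_k^φ(λ) = 1. -/
/-!
Choose the phase so that `δ = π/(2k+1)`, i.e. `cos φ = 1 − (1 − cos δ)/λ`; the lower bound on `λ`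
is exactly what makes this a cosine. Then `cos((2k+1)δ) = −1`, and
`P = B − A = (λ / sin²δ)(1 + cos δ)(1 − cos φ) = (1 + cos δ)(1 − cos δ) / sin²δ = 1`.
-/

open Real

lemma sin_arcsin_sqrt_sq {x : ℝ} (h₀ : 0 ≤ x) (h₁ : x ≤ 1) : sin (arcsin √x) ^ 2 = x := by
  rw [sin_arcsin (by linarith [sqrt_nonneg x]) (sqrt_le_one.mpr h₁), sq_sqrt h₀]

lemma sin_half_sq (x : ℝ) : sin (x / 2) ^ 2 = (1 - cos x) / 2 := by
  rw [sin_sq_eq_half_sub, mul_div_cancel₀ x two_ne_zero]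
  ring

lemma exists_phase_one_sub_mul_eq {c lam : ℝ} (hc : c < 1) (hlam : 1 - c ≤ 2 * lam) :
    ∃ φ ∈ Set.Ioc 0 π, 1 - lam * (1 - cos φ) = c := by
  have hlam₀ : 0 < lam := by linarith
  have hle : (1 - c) / lam ≤ 2 := (div_le_iff₀ hlam₀).mpr (by linarith)
  have hpos : 0 < (1 - c) / lam := div_pos (by linarith) hlam₀
  refine ⟨arccos (1 - (1 - c) / lam), ⟨arccos_pos.mpr (by linarith), arccos_le_pi _⟩, ?_⟩
  rw [cos_arccos (by linarith) (by linarith)]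
  field_simp
  ring

lemma grovP_eq_one_of_cos_eq {k : ℕ} {φ lam d : ℝ} (hlam₀ : 0 ≤ lam) (hlam₁ : lam ≤ 1)
    (hd₀ : 0 < d) (hdπ : d < π) (hcos : 1 - lam * (1 - cos φ) = cos d)
    (hres : cos ((2 * k + 1) * d) = -1) : grovP k φ lam = 1 := by
  have hδ : arccos (1 - lam * (1 - cos φ)) = d := by rw [hcos, arccos_cos hd₀.le hdπ.le]
  have hsin : sin d ^ 2 ≠ 0 := (pow_pos (sin_pos_of_pos_of_lt_pi hd₀ hdπ) 2).ne'
  simp only [grovP, hδ, hres, sin_arcsin_sqrt_sq hlam₀ hlam₁]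
  have hkey : lam * (1 - cos φ) * (1 + cos d) = sin d ^ 2 := by
    rw [sin_sq, ← hcos]
    ring
  rw [div_mul_eq_mul_div, div_mul_eq_mul_div, div_mul_eq_mul_div, ← add_div, div_eq_one_iff_eq hsin]
  linear_combination hkey

/-- For k ≥ 1 and every λ with sin²(π/(4k+2)) ≤ λ < 1, there is a
phase φ ∈ (0,π] with P_k^φ(λ) = 1. -/
theorem exists_phase_reaching_certainty
    (k : ℕ) (hk : 1 ≤ k) (lam : ℝ)
    (hlam : Real.sin (Real.pi / (4 * (k : ℝ) + 2)) ^ 2 ≤ lam ∧ lam < 1) :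
    ∃ φ ∈ Set.Ioc (0 : ℝ) Real.pi, grovP k φ lam = 1 := by
  obtain ⟨hlam_ge, hlam_lt⟩ := hlam
  set d := π / (2 * (k : ℝ) + 1)
  have hk' : (1 : ℝ) ≤ k := by exact_mod_cast hk
  have hd₀ : 0 < d := div_pos pi_pos (by linarith)
  have hdπ : d < π := div_lt_self pi_pos (by linarith)
  have hcos_lt : cos d < 1 := by
    simpa using cos_lt_cos_of_nonneg_of_le_pi le_rfl hdπ.le hd₀
  have hlam_ge' : (1 - cos d) / 2 ≤ lam := by
    rwa [← sin_half_sq, div_div, show (2 * (k : ℝ) + 1) * 2 = 4 * k + 2 by ring]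
  obtain ⟨φ, hφ, hcos⟩ := exists_phase_one_sub_mul_eq hcos_lt (by linarith : 1 - cos d ≤ 2 * lam)
  have hres : cos ((2 * k + 1) * d) = -1 := by
    rw [mul_div_cancel₀ _ (by positivity), cos_pi]
  exact ⟨φ, hφ, grovP_eq_one_of_cos_eq (by linarith) hlam_lt.le hd₀ hdπ hcos hres⟩
end

section
/- Fix an integer k ≥ 1 and let φ_k^min = arccos(1 − (2 − 2cos(π/(2k+1)))/(1 − cos(π/(2k−1)))). Then for every φ ∈ (φ_k^min, π], the point λ_{k,1}^{φ,max} = (1 − cos(π/(2k+1)))/(1 − cos φ) satisfies sin²(π/(4k+2)) ≤ λ_{k,1}^{φ,max} < sin²(π/(4k−2)), i.e. λ_{k,1}^{φ,max} ∈ Λ_k (where for k = 1 the right endpoint sin²(π/2) = 1). -/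
/-- For k ≥ 1 and every φ ∈ (φ_k^min, π], the point
λ_{k,1}^{φ,max} = (1 − cos(π/(2k+1)))/(1 − cos φ) satisfies
sin²(π/(4k+2)) ≤ λ_{k,1}^{φ,max} < sin²(π/(4k−2)). -/
theorem first_max_point_in_lambda_range
    (k : ℕ) (hk : 1 ≤ k) (φ : ℝ) (hφ : φ ∈ Set.Ioc (phiMin k) Real.pi) :
    Real.sin (Real.pi / (4 * (k : ℝ) + 2)) ^ 2 ≤
        (1 - Real.cos (Real.pi / (2 * (k : ℝ) + 1))) / (1 - Real.cos φ) ∧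
      (1 - Real.cos (Real.pi / (2 * (k : ℝ) + 1))) / (1 - Real.cos φ) <
        Real.sin (Real.pi / (4 * (k : ℝ) - 2)) ^ 2 := by
  simp only [phiMin] at hφ
  obtain ⟨hφ1, hφ2⟩ := hφ
  have hk1 : (1:ℝ) ≤ (k:ℝ) := by exact_mod_cast hk
  set A : ℝ := Real.pi / (2 * (k:ℝ) + 1) with hA
  set B : ℝ := Real.pi / (2 * (k:ℝ) - 1) with hB
  have hpi := Real.pi_pos
  have hA0 : 0 < A := div_pos hpi (by linarith)
  have hApi : A < Real.pi := by
    rw [hA, div_lt_iff₀ (by linarith)]; nlinarith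
  have hB0 : 0 < B := div_pos hpi (by linarith)
  have hBpi : B ≤ Real.pi := by
    rw [hB, div_le_iff₀ (by linarith)]; nlinarith
  have hAB : A < B := by
    rw [hA, hB]
    exact div_lt_div_of_pos_left hpi (by linarith) (by linarith)
  -- cos monotonicity facts
  have hcosAB : Real.cos B < Real.cos A :=
    Real.strictAntiOn_cos ⟨hA0.le, hApi.le⟩ ⟨hB0.le, hBpi⟩ hAB
  have hcosA1 : Real.cos A < 1 := by
    have h := Real.strictAntiOn_cos ⟨le_rfl, hpi.le⟩ ⟨hA0.le, hApi.le⟩ hA0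
    simpa using h
  have hBpos : 0 < 1 - Real.cos B := by linarith
  set x : ℝ := 1 - (2 - 2 * Real.cos A) / (1 - Real.cos B) with hx
  have hfrac0 : 0 < (2 - 2 * Real.cos A) / (1 - Real.cos B) :=
    div_pos (by linarith) hBpos
  have hfrac2 : (2 - 2 * Real.cos A) / (1 - Real.cos B) < 2 := by
    rw [div_lt_iff₀ hBpos]; linarith
  have hx1 : x < 1 := by rw [hx]; linarith
  have hxm1 : -1 < x := by rw [hx]; linarith
  have hcosmin : Real.cos (Real.arccos x) = x := Real.cos_arccos hxm1.le hx1.le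
  have harcmem : Real.arccos x ∈ Set.Icc 0 Real.pi :=
    ⟨Real.arccos_nonneg x, Real.arccos_le_pi x⟩
  have hcosφ : Real.cos φ < x := by
    have h := Real.strictAntiOn_cos harcmem ⟨le_trans harcmem.1 hφ1.le, hφ2⟩ hφ1
    rw [hcosmin] at h; exact h
  have hφpos : 0 < 1 - Real.cos φ := by linarith
  -- key inequality from hcosφ
  have hkey : 2 - 2 * Real.cos A < (1 - Real.cos φ) * (1 - Real.cos B) := by
    have : (2 - 2 * Real.cos A) / (1 - Real.cos B) < 1 - Real.cos φ := by
      rw [hx] at hcosφ; linarith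
    exact (div_lt_iff₀ hBpos).mp this
  -- half-angle rewrites
  have e1 : Real.pi / (4 * (k:ℝ) + 2) = A / 2 := by
    rw [hA, div_div]; congr 1; ring
  have e2 : Real.pi / (4 * (k:ℝ) - 2) = B / 2 := by
    rw [hB, div_div]; congr 1; ring
  have s1 : Real.sin (Real.pi / (4 * (k:ℝ) + 2)) ^ 2 = (1 - Real.cos A) / 2 := by
    rw [e1, Real.sin_sq_eq_half_sub]
    rw [show 2 * (A / 2) = A by ring]; ring
  have s2 : Real.sin (Real.pi / (4 * (k:ℝ) - 2)) ^ 2 = (1 - Real.cos B) / 2 := by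
    rw [e2, Real.sin_sq_eq_half_sub]
    rw [show 2 * (B / 2) = B by ring]; ring
  have hcosφ2 : 1 - Real.cos φ ≤ 2 := by
    have := Real.neg_one_le_cos φ; linarith
  constructor
  · rw [s1]
    exact div_le_div_of_nonneg_left (by linarith) hφpos hcosφ2
  · rw [s2, div_lt_div_iff₀ hφpos (by norm_num)]
    nlinarith
end

section
/- Fix an integer k ≥ 1 and let φ_k^min = arccos(1 − (2 − 2cos(π/(2k+1)))/(1 − cos(π/(2k−1)))). Then for every φ ∈ (0, φ_k^min], one has λ_{k,1}^{φ,max} = (1 − cos(π/(2k+1)))/(1 − cos φ) ≥ sin²(π/(4k−2)) (where for k = 1 the right-hand side sin²(π/2) = 1). -/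
/-- For k ≥ 1 and every φ ∈ (0, φ_k^min], one has
λ_{k,1}^{φ,max} = (1 − cos(π/(2k+1)))/(1 − cos φ) ≥ sin²(π/(4k−2)). -/
theorem first_max_point_beyond_range_for_small_phase
    (k : ℕ) (hk : 1 ≤ k) (φ : ℝ) (hφ : φ ∈ Set.Ioc (0 : ℝ) (phiMin k)) :
    Real.sin (Real.pi / (4 * (k : ℝ) - 2)) ^ 2 ≤
      (1 - Real.cos (Real.pi / (2 * (k : ℝ) + 1))) / (1 - Real.cos φ) := by
  obtain ⟨hφ0, hφle⟩ := hφ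
  have hk1 : (1 : ℝ) ≤ (k : ℝ) := by exact_mod_cast hk
  have hπ := Real.pi_pos
  set c1 := Real.cos (Real.pi / (2 * (k : ℝ) + 1)) with hc1def
  set c2 := Real.cos (Real.pi / (2 * (k : ℝ) - 1)) with hc2def
  -- basic positivity facts
  have hden1 : (0 : ℝ) < 2 * (k : ℝ) + 1 := by linarith
  have hden2 : (0 : ℝ) < 2 * (k : ℝ) - 1 := by linarith
  have hx1pos : 0 < Real.pi / (2 * (k : ℝ) + 1) := div_pos hπ hden1
  have hx2pos : 0 < Real.pi / (2 * (k : ℝ) - 1) := div_pos hπ hden2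
  have hx2le : Real.pi / (2 * (k : ℝ) - 1) ≤ Real.pi := by
    rw [div_le_iff₀ hden2]; nlinarith
  have hx1lt : Real.pi / (2 * (k : ℝ) + 1) < Real.pi / (2 * (k : ℝ) - 1) := by
    apply div_lt_div_of_pos_left hπ hden2; linarith
  -- c2 < c1 < 1
  have hc1lt1 : c1 < 1 := by
    have := Real.cos_lt_cos_of_nonneg_of_le_pi le_rfl
      (le_trans (le_of_lt hx1lt) hx2le) hx1pos
    simpa using this
  have hc2lt : c2 < c1 :=
    Real.cos_lt_cos_of_nonneg_of_le_pi (le_of_lt hx1pos) hx2le hx1lt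
  have hc2lt1 : c2 < 1 := lt_trans hc2lt hc1lt1
  have hc2ge : -1 ≤ c2 := Real.neg_one_le_cos _
  set t : ℝ := (2 - 2 * c1) / (1 - c2) with htdef
  have h1c2 : (0 : ℝ) < 1 - c2 := by linarith
  have ht0 : 0 ≤ t := div_nonneg (by linarith) (le_of_lt h1c2)
  have ht2 : t ≤ 2 := by
    rw [div_le_iff₀ h1c2]; nlinarith
  -- φ ≤ phiMin → cos φ ≥ 1 - t
  have hcosmin : Real.cos (phiMin k) = 1 - t := by
    rw [phiMin, Real.cos_arccos (by linarith) (by linarith)]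
  have hminpi : phiMin k ≤ Real.pi := by rw [phiMin]; exact Real.arccos_le_pi _
  have hφpi : φ ≤ Real.pi := le_trans hφle hminpi
  have hcosφ : 1 - t ≤ Real.cos φ := by
    rw [← hcosmin]
    exact Real.cos_le_cos_of_nonneg_of_le_pi (le_of_lt hφ0) hminpi hφle
  have hcosφlt1 : Real.cos φ < 1 := by
    have := Real.cos_lt_cos_of_nonneg_of_le_pi le_rfl hφpi hφ0
    simpa using this
  have h1cφ : 0 < 1 - Real.cos φ := by linarith
  -- sin² half-angle
  have hhalf : Real.sin (Real.pi / (4 * (k : ℝ) - 2)) ^ 2 = (1 - c2) / 2 := by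
    have harg : 2 * (Real.pi / (4 * (k : ℝ) - 2)) = Real.pi / (2 * (k : ℝ) - 1) := by
      have h42 : (4 * (k : ℝ) - 2) ≠ 0 := by linarith
      field_simp
      ring
    rw [Real.sin_sq_eq_half_sub, harg, hc2def]; ring
  rw [hhalf, div_le_div_iff₀ (by norm_num) h1cφ]
  -- from 1 - cos φ ≤ t get (1-c2)(1-cosφ) ≤ 2 - 2c1
  have key : (1 - Real.cos φ) * (1 - c2) ≤ 2 - 2 * c1 := by
    have : 1 - Real.cos φ ≤ t := by linarith
    calc (1 - Real.cos φ) * (1 - c2) ≤ t * (1 - c2) := by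
          apply mul_le_mul_of_nonneg_right this (le_of_lt h1c2)
      _ = 2 - 2 * c1 := div_mul_cancel₀ _ (ne_of_gt h1c2)
  nlinarith
end

section
/- Fix an integer k ≥ 1 and let φ_k^min = arccos(1 − (2 − 2cos(π/(2k+1)))/(1 − cos(π/(2k−1)))). Then for every λ ∈ Λ_k = [sin²(π/(4k+2)), sin²(π/(4k−2))) and every φ ∈ (0, φ_k^min], one has P_k^φ(λ) ≤ P_k^{φ_k^min}(λ). -/
open Real Set

noncomputable def grovReduced (lam m δ : ℝ) : ℝ :=
  ((lam - 1) * cos (m * δ) + lam + cos δ) / (1 + cos δ)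

lemma grovP_eq_grovReduced {k : ℕ} {φ lam : ℝ} (hlam0 : 0 < lam) (hlam1 : lam < 1)
    (hφ : cos φ < 1) :
    grovP k φ lam = grovReduced lam (2 * k + 1) (arccos (1 - lam * (1 - cos φ))) := by
  set c := cos φ
  set δ := arccos (1 - lam * (1 - c))
  have hc : -1 ≤ c := neg_one_le_cos φ
  have hcos_δ : cos δ = 1 - lam * (1 - c) := cos_arccos (by nlinarith) (by nlinarith)
  have hsin_θ : sin (arcsin √lam) ^ 2 = lam := by
    rw [sin_arcsin (by linarith [sqrt_nonneg lam]) (sqrt_le_one.mpr hlam1.le)]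
    exact sq_sqrt hlam0.le
  have hsin_δ : sin δ ^ 2 = lam * (1 - c) * (2 - lam * (1 - c)) := by
    rw [sin_sq, hcos_δ]; ring
  have h1c : 1 - c ≠ 0 := by linarith
  have h2 : 2 - lam * (1 - c) ≠ 0 := by nlinarith
  show sin (arcsin √lam) ^ 2 / sin δ ^ 2 * (c - cos δ) * cos ((2 * k + 1) * δ) +
      sin (arcsin √lam) ^ 2 / sin δ ^ 2 * (1 - c * cos δ) = grovReduced lam (2 * k + 1) δ
  rw [hsin_θ, grovReduced, hsin_δ, hcos_δ,
    show 1 + (1 - lam * (1 - c)) = 2 - lam * (1 - c) by ring]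
  field_simp
  ring

lemma hasDerivAt_grovReduced (lam m : ℝ) {x : ℝ} (hx : 1 + cos x ≠ 0) :
    HasDerivAt (grovReduced lam m)
      ((1 - lam) * (m * sin (m * x) * (1 + cos x) - sin x * (1 + cos (m * x))) /
        (1 + cos x) ^ 2) x := by
  have hmul : HasDerivAt (fun δ : ℝ => m * δ) m x := by
    simpa using (hasDerivAt_id x).const_mul m
  have hnum : HasDerivAt (fun δ => (lam - 1) * cos (m * δ) + lam + cos δ)
      ((lam - 1) * (-sin (m * x) * m) + -sin x) x :=
    ((((hasDerivAt_cos (m * x)).comp x hmul).const_mul (lam - 1)).add_const lam).add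
      (hasDerivAt_cos x)
  have hden : HasDerivAt (fun δ => 1 + cos δ) (-sin x) x := (hasDerivAt_cos x).const_add 1
  exact (hnum.div hden hx).congr_deriv (by ring)

lemma sin_mul_cos_mul_le {m a : ℝ} (hm : 1 ≤ m) (ha : 0 ≤ a) (hma : m * a ≤ π / 2) :
    sin a * cos (m * a) ≤ m * (sin (m * a) * cos a) := by
  have hama : a ≤ m * a := le_mul_of_one_le_left ha hm
  have hcos_a : 0 ≤ cos a := cos_nonneg_of_mem_Icc ⟨by linarith [pi_pos], by linarith⟩
  have hsin_ma : 0 ≤ sin (m * a) := sin_nonneg_of_nonneg_of_le_pi (by linarith) (by linarith)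
  have hsin_sub : 0 ≤ sin (m * a - a) :=
    sin_nonneg_of_nonneg_of_le_pi (by linarith) (by linarith [pi_pos])
  rw [sin_sub] at hsin_sub
  nlinarith [mul_nonneg hsin_ma hcos_a]

lemma sin_mul_one_add_cos_mul_le {m δ : ℝ} (hm : 1 ≤ m) (hδ : 0 ≤ δ) (hmδ : m * δ ≤ π) :
    sin δ * (1 + cos (m * δ)) ≤ m * sin (m * δ) * (1 + cos δ) := by
  set a := δ / 2
  have hδa : δ = 2 * a := by ring
  have hmδa : m * δ = 2 * (m * a) := by ring
  have hcos_a : 0 ≤ cos a := cos_nonneg_of_mem_Icc ⟨by linarith [pi_pos], by nlinarith⟩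
  have hcos_ma : 0 ≤ cos (m * a) := cos_nonneg_of_mem_Icc ⟨by nlinarith [pi_pos], by linarith⟩
  have hhalf := sin_mul_cos_mul_le hm (by positivity) (by linarith : m * a ≤ π / 2)
  rw [hmδa, hδa, sin_two_mul, sin_two_mul, cos_two_mul, cos_two_mul]
  nlinarith [mul_nonneg hcos_a hcos_ma]

lemma grovReduced_monotoneOn {lam m : ℝ} (hlam : lam ≤ 1) (hm : 1 < m) :
    MonotoneOn (grovReduced lam m) (Icc 0 (π / m)) := by
  have hπm : π / m < π := div_lt_self pi_pos hm
  have hden : ∀ x ∈ Icc 0 (π / m), 1 + cos x ≠ 0 := by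
    intro x hx
    have := cos_lt_cos_of_nonneg_of_le_pi hx.1 le_rfl (hx.2.trans_lt hπm)
    rw [cos_pi] at this
    linarith
  have hderiv x (hx : x ∈ Icc 0 (π / m)) := hasDerivAt_grovReduced lam m (hden x hx)
  apply monotoneOn_of_deriv_nonneg (convex_Icc _ _)
  · exact fun x hx => (hderiv x hx).continuousAt.continuousWithinAt
  · rw [interior_Icc]
    exact fun x hx => (hderiv x (Ioo_subset_Icc_self hx)).differentiableAt.differentiableWithinAt
  · rw [interior_Icc]
    intro x hx
    rw [(hderiv x (Ioo_subset_Icc_self hx)).deriv]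
    have hmx : m * x ≤ π := by rw [← le_div_iff₀' (by linarith)]; exact hx.2.le
    have := sin_mul_one_add_cos_mul_le hm.le hx.1.le hmx
    exact div_nonneg (mul_nonneg (by linarith) (by linarith)) (sq_nonneg _)

lemma sin_sq_pi_div_four_mul_sub_two (k : ℝ) :
    sin (π / (4 * k - 2)) ^ 2 = (1 - cos (π / (2 * k - 1))) / 2 := by
  rw [sin_sq_eq_half_sub, show 2 * (π / (4 * k - 2)) = π / (2 * k - 1) by
    rw [show 4 * k - 2 = (2 * k - 1) * 2 by ring, ← div_div, mul_div_cancel₀ _ two_ne_zero]]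
  ring

section phiMin

variable {k : ℕ} (hk : 1 ≤ k)
include hk

lemma cos_pi_div_two_mul_sub_one_lt_one : cos (π / (2 * k - 1)) < 1 := by
  have hk' : (1 : ℝ) ≤ k := by exact_mod_cast hk
  have := cos_lt_cos_of_nonneg_of_le_pi le_rfl
    (div_le_self pi_pos.le (by linarith : (1 : ℝ) ≤ 2 * k - 1))
    (div_pos pi_pos (by linarith : (0 : ℝ) < 2 * k - 1))
  rwa [cos_zero] at this

lemma cos_phiMin :
    cos (phiMin k) = 1 - (2 - 2 * cos (π / (2 * k + 1))) / (1 - cos (π / (2 * k - 1))) := by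
  have hk' : (1 : ℝ) ≤ k := by exact_mod_cast hk
  have hq : 0 < 1 - cos (π / (2 * k - 1)) := by
    linarith [cos_pi_div_two_mul_sub_one_lt_one hk]
  have hcos_le : cos (π / (2 * k - 1)) ≤ cos (π / (2 * k + 1)) :=
    cos_le_cos_of_nonneg_of_le_pi (div_pos pi_pos (by linarith)).le
      (div_le_self pi_pos.le (by linarith))
      (div_le_div_of_nonneg_left pi_pos.le (by linarith) (by linarith))
  have hcos_le_one := cos_le_one (π / (2 * k + 1))
  apply cos_arccos
  · rw [le_sub_comm, sub_neg_eq_add, div_le_iff₀ hq]; linarith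
  · rw [sub_le_self_iff]; exact div_nonneg (by linarith) hq.le

lemma arccos_one_sub_mul_one_sub_cos_phiMin_le {lam : ℝ}
    (hlam : lam < sin (π / (4 * k - 2)) ^ 2) :
    arccos (1 - lam * (1 - cos (phiMin k))) ≤ π / (2 * k + 1) := by
  have hk' : (1 : ℝ) ≤ k := by exact_mod_cast hk
  have hq : 0 < 1 - cos (π / (2 * k - 1)) := by
    linarith [cos_pi_div_two_mul_sub_one_lt_one hk]
  rw [sin_sq_pi_div_four_mul_sub_two] at hlam
  have hr : 0 ≤ 1 - cos (phiMin k) := by linarith [cos_le_one (phiMin k)]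
  have hmul : lam * (1 - cos (phiMin k)) ≤ 1 - cos (π / (2 * k + 1)) := calc
    lam * (1 - cos (phiMin k)) ≤ (1 - cos (π / (2 * k - 1))) / 2 * (1 - cos (phiMin k)) := by
      gcongr
    _ = 1 - cos (π / (2 * k + 1)) := by rw [cos_phiMin hk]; field_simp; ring
  calc arccos (1 - lam * (1 - cos (phiMin k)))
      ≤ arccos (cos (π / (2 * k + 1))) := arccos_le_arccos (by linarith)
    _ = π / (2 * k + 1) :=
      arccos_cos (div_pos pi_pos (by linarith)).le (div_le_self pi_pos.le (by linarith))

end phiMin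

/-- For k ≥ 1, every λ ∈ Λ_k = [sin²(π/(4k+2)), sin²(π/(4k−2)))
and every φ ∈ (0, φ_k^min], one has P_k^φ(λ) ≤ P_k^{φ_k^min}(λ). -/
theorem small_phases_dominated_by_phiMin
    (k : ℕ) (hk : 1 ≤ k) (lam : ℝ)
    (hlam : lam ∈ Set.Ico (Real.sin (Real.pi / (4 * (k : ℝ) + 2)) ^ 2)
      (Real.sin (Real.pi / (4 * (k : ℝ) - 2)) ^ 2))
    (φ : ℝ) (hφ : φ ∈ Set.Ioc (0 : ℝ) (phiMin k)) :
    grovP k φ lam ≤ grovP k (phiMin k) lam := by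
  obtain ⟨hφ0, hφle⟩ := hφ
  have hk' : (1 : ℝ) ≤ k := by exact_mod_cast hk
  have hlam0 : 0 < lam := (pow_pos (sin_pos_of_pos_of_lt_pi (div_pos pi_pos (by linarith))
    (div_lt_self pi_pos (by linarith))) 2).trans_le hlam.1
  have hlam1 : lam < 1 := hlam.2.trans_le (sin_sq_le_one _)
  have hφmin_le_pi : phiMin k ≤ π := arccos_le_pi _
  have hcos_le : cos (phiMin k) ≤ cos φ :=
    cos_le_cos_of_nonneg_of_le_pi hφ0.le hφmin_le_pi hφle
  have hcos_lt_one : cos φ < 1 := by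
    simpa using cos_lt_cos_of_nonneg_of_le_pi le_rfl (hφle.trans hφmin_le_pi) hφ0
  have hδ_le := arccos_one_sub_mul_one_sub_cos_phiMin_le hk hlam.2
  rw [grovP_eq_grovReduced hlam0 hlam1 hcos_lt_one,
    grovP_eq_grovReduced hlam0 hlam1 (hcos_le.trans_lt hcos_lt_one)]
  have hδ_mono : arccos (1 - lam * (1 - cos φ)) ≤ arccos (1 - lam * (1 - cos (phiMin k))) :=
    arccos_le_arccos (by gcongr)
  exact grovReduced_monotoneOn hlam1.le (by linarith)
    ⟨arccos_nonneg _, hδ_mono.trans hδ_le⟩ ⟨arccos_nonneg _, hδ_le⟩ hδ_mono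
end

section
/- Let k = 1, so that Λ_1 = [1/4, 1) and φ_1^min = π/3. Then for every φ ∈ (π/3, π], the point λ_{1,1}^{φ,min} = (5 − 4cos φ)/(6 − 6cos φ) lies in [1/4, 1), it is a local minimum point of the function λ ↦ P_1^φ(λ), and it is the only local minimum point of P_1^φ in [1/4, 1). -/
/-!
For `0 < λ < 1` we have `sin² θ = λ` and `cos δ = 1 - λ(1 - cos φ)`, so the triple-angle formula
turns `P_1^φ` into the cubic `groverCubic (cos φ)` in `λ`. Its derivative
`12(1 - c)²(λ - 1/(2 - 2c))(λ - (5 - 4c)/(6 - 6c))` has two roots; when `c = cos φ < 1/2` both lie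
in `(0, 1)`, and the factorisations of the cubic around them show that the larger one is a local
minimum while the cubic decreases just to the right of the smaller one.
-/
open Real Filter Topology

noncomputable def groverCubic (c x : ℝ) : ℝ :=
  4 * (1 - c) ^ 2 * x ^ 3 - 4 * (1 - c) * (2 - c) * x ^ 2 + (5 - 4 * c) * x

lemma grovP_one_eq_groverCubic {φ lam : ℝ} (h0 : 0 < lam) (h1 : lam < 1) (hφ : cos φ < 1) :
    grovP 1 φ lam = groverCubic (cos φ) lam := by
  set c : ℝ := 1 - lam * (1 - cos φ) with hc
  have hc_gt : -1 < c := by nlinarith [neg_one_le_cos φ]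
  have hc_lt : c < 1 := by nlinarith
  have hsin_arccos : sin (arccos c) ^ 2 = 1 - c ^ 2 := by
    rw [sin_arccos, sq_sqrt (by nlinarith)]
  have hsin_arcsin : sin (arcsin (√lam)) ^ 2 = lam := by
    rw [sin_arcsin (by linarith [sqrt_nonneg lam]) (sqrt_le_one.mpr h1.le), sq_sqrt h0.le]
  have h3 : (2 * ((1 : ℕ) : ℝ) + 1) * arccos c = 3 * arccos c := by norm_num
  have hsq : 1 - c ^ 2 ≠ 0 := by nlinarith
  simp only [grovP, ← hc, h3, cos_three_mul, cos_arccos hc_gt.le hc_lt.le, hsin_arcsin,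
    hsin_arccos, groverCubic]
  rw [hc] at hsq ⊢
  field_simp
  ring

section groverCubic

variable {c : ℝ}

lemma groverCubic_sub_groverCubic_larger_crit (hc : c ≠ 1) (x : ℝ) :
    groverCubic c x - groverCubic c ((5 - 4 * c) / (6 - 6 * c)) =
      4 * (1 - c) ^ 2 * (x - (5 - 4 * c) / (6 - 6 * c)) ^ 2 * (x - (1 + c) / (3 - 3 * c)) := by
  have : 1 - c ≠ 0 := sub_ne_zero.mpr hc.symm
  have : 3 - 3 * c ≠ 0 := by intro h; apply this; linarith
  have : 6 - 6 * c ≠ 0 := by intro h; apply this; linarith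
  unfold groverCubic
  field_simp
  ring

lemma groverCubic_sub_groverCubic_smaller_crit (hc : c ≠ 1) (x : ℝ) :
    groverCubic c x - groverCubic c (1 / (2 - 2 * c)) =
      4 * (1 - c) ^ 2 * (x - 1 / (2 - 2 * c)) ^ 2 * (x - 1) := by
  have : 1 - c ≠ 0 := sub_ne_zero.mpr hc.symm
  have : 2 - 2 * c ≠ 0 := by intro h; apply this; linarith
  unfold groverCubic
  field_simp
  ring

lemma hasDerivAt_groverCubic (hc : c ≠ 1) (x : ℝ) :
    HasDerivAt (groverCubic c)
      (12 * (1 - c) ^ 2 * ((x - 1 / (2 - 2 * c)) * (x - (5 - 4 * c) / (6 - 6 * c)))) x := by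
  have : 1 - c ≠ 0 := sub_ne_zero.mpr hc.symm
  have : 2 - 2 * c ≠ 0 := by intro h; apply this; linarith
  have : 6 - 6 * c ≠ 0 := by intro h; apply this; linarith
  have h := (((hasDerivAt_pow 3 x).const_mul (4 * (1 - c) ^ 2)).sub
    ((hasDerivAt_pow 2 x).const_mul (4 * (1 - c) * (2 - c)))).add
    ((hasDerivAt_id x).const_mul (5 - 4 * c))
  refine h.congr_deriv ?_
  field_simp
  push_cast
  ring

lemma eq_of_isLocalMin_groverCubic (hc : c ≠ 1) {x : ℝ} (hx : IsLocalMin (groverCubic c) x) :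
    x = 1 / (2 - 2 * c) ∨ x = (5 - 4 * c) / (6 - 6 * c) := by
  have h := hx.hasDerivAt_eq_zero (hasDerivAt_groverCubic hc x)
  have : (12 : ℝ) * (1 - c) ^ 2 ≠ 0 := by
    have : 1 - c ≠ 0 := sub_ne_zero.mpr hc.symm
    positivity
  simpa [this, sub_eq_zero] using h

lemma isLocalMin_groverCubic (hc : c < 1 / 2) :
    IsLocalMin (groverCubic c) ((5 - 4 * c) / (6 - 6 * c)) := by
  have hroot : (1 + c) / (3 - 3 * c) < (5 - 4 * c) / (6 - 6 * c) := by
    rw [div_lt_div_iff₀ (by linarith) (by linarith)]; nlinarith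
  filter_upwards [Ioi_mem_nhds hroot] with x (hx : _ < x)
  have h := groverCubic_sub_groverCubic_larger_crit (hc.trans one_half_lt_one).ne x
  have : 0 ≤ 4 * (1 - c) ^ 2 * (x - (5 - 4 * c) / (6 - 6 * c)) ^ 2 *
      (x - (1 + c) / (3 - 3 * c)) := mul_nonneg (by positivity) (by linarith)
  linarith

lemma not_isLocalMin_groverCubic (hc : c < 1 / 2) :
    ¬ IsLocalMin (groverCubic c) (1 / (2 - 2 * c)) := by
  intro hmin
  have h1c : 0 < 1 - c := by linarith
  have hlt : 1 / (2 - 2 * c) < 1 := by rw [div_lt_one (by linarith)]; linarith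
  obtain ⟨x, hle, hx⟩ :=
    ((hmin.filter_mono nhdsWithin_le_nhds).and (Ioo_mem_nhdsGT hlt)).exists
  have h := groverCubic_sub_groverCubic_smaller_crit (hc.trans one_half_lt_one).ne x
  have : 4 * (1 - c) ^ 2 * (x - 1 / (2 - 2 * c)) ^ 2 * (x - 1) < 0 :=
    mul_neg_of_pos_of_neg (mul_pos (by positivity) (pow_pos (sub_pos.mpr hx.1) 2))
      (by linarith [hx.2])
  linarith

end groverCubic

lemma isLocalMin_grovP_one_iff {φ lam : ℝ} (h0 : 0 < lam) (h1 : lam < 1) (hφ : cos φ < 1) :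
    IsLocalMin (grovP 1 φ) lam ↔ IsLocalMin (groverCubic (cos φ)) lam :=
  EventuallyEq.isLocalMin_iff <| eventually_of_mem (Ioo_mem_nhds h0 h1) fun _ hx ↦
    grovP_one_eq_groverCubic hx.1 hx.2 hφ

/-- For k = 1 (so Λ_1 = [1/4,1) and φ_1^min = π/3), for every
φ ∈ (π/3, π] the point λ_{1,1}^{φ,min} = (5 − 4cos φ)/(6 − 6cos φ) lies in
[1/4, 1), is a local minimum point of λ ↦ P_1^φ(λ), and is the only local
minimum point of P_1^φ in [1/4, 1). -/
theorem unique_local_min_for_one_iteration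
    (φ : ℝ) (hφ : φ ∈ Set.Ioc (Real.pi / 3) Real.pi)
    (lamMin : ℝ) (hlamMin : lamMin = (5 - 4 * Real.cos φ) / (6 - 6 * Real.cos φ)) :
    lamMin ∈ Set.Ico (1 / 4 : ℝ) 1 ∧
      IsLocalMin (grovP 1 φ) lamMin ∧
      ∀ lam ∈ Set.Ico (1 / 4 : ℝ) 1, IsLocalMin (grovP 1 φ) lam → lam = lamMin := by
  have hcos : cos φ < 1 / 2 := by
    simpa [cos_pi_div_three] using cos_lt_cos_of_nonneg_of_le_pi (by positivity) hφ.2 hφ.1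
  have hmem : lamMin ∈ Set.Ico (1 / 4 : ℝ) 1 := by
    rw [hlamMin, Set.mem_Ico, le_div_iff₀ (by linarith), div_lt_one (by linarith)]
    constructor <;> linarith [neg_one_le_cos φ]
  have hlocal_iff (lam : ℝ) (hlam : lam ∈ Set.Ico (1 / 4 : ℝ) 1) :
      IsLocalMin (grovP 1 φ) lam ↔ IsLocalMin (groverCubic (cos φ)) lam :=
    isLocalMin_grovP_one_iff (by linarith [hlam.1]) hlam.2 (by linarith)
  refine ⟨hmem, (hlocal_iff _ hmem).2 (hlamMin ▸ isLocalMin_groverCubic hcos), ?_⟩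
  intro lam hlam hmin
  have hcubic := (hlocal_iff lam hlam).1 hmin
  rcases eq_of_isLocalMin_groverCubic (hcos.trans one_half_lt_one).ne hcubic with rfl | rfl
  · exact absurd hcubic (not_isLocalMin_groverCubic hcos)
  · exact hlamMin.symm
end

section
/- Fix an integer k ≥ 2 and let φ_k^min = arccos(1 − (2 − 2cos(π/(2k+1)))/(1 − cos(π/(2k−1)))). Then for every φ ∈ (φ_k^min, π], the function λ ↦ P_k^φ(λ) has no local minimum point in Λ_k = [sin²(π/(4k+2)), sin²(π/(4k−2))). -/
open Real Set Filter Topology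

noncomputable def grovAngle (p lam : ℝ) : ℝ := arccos (1 - lam * (1 - p))

/-- `(1 - cos φ) · P_k^φ` as a function of `δ`, with `m = 2k + 1` and `p = cos φ`. -/
noncomputable def grovG (m p d : ℝ) : ℝ :=
  ((p - cos d) * cos (m * d) + 1 - p * cos d) / (1 + cos d)

noncomputable def grovGNum (m p d : ℝ) : ℝ :=
  (1 + p) * sin d * (1 + cos (m * d)) + m * (cos d - p) * (1 + cos d) * sin (m * d)

section grovAngle

variable {p t : ℝ}

lemma cos_grovAngle (hp₁ : -1 ≤ p) (hp : p ≤ 1) (ht₀ : 0 ≤ t) (ht₁ : t ≤ 1) :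
    cos (grovAngle p t) = 1 - t * (1 - p) :=
  cos_arccos (by nlinarith) (by nlinarith)

lemma grovAngle_pos (hp : p < 1) (ht : 0 < t) : 0 < grovAngle p t :=
  arccos_pos.2 (by nlinarith)

lemma grovAngle_lt_pi (hp₁ : -1 ≤ p) (hp : p < 1) (ht : t < 1) : grovAngle p t < π :=
  (arccos_lt_pi).2 (by nlinarith)

lemma grovAngle_strictMonoOn (hp₁ : -1 ≤ p) (hp : p < 1) :
    StrictMonoOn (grovAngle p) (Icc 0 1) := fun a ha b hb hab =>
  strictAntiOn_arccos ⟨by nlinarith [hb.2], by nlinarith [hb.1]⟩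
    ⟨by nlinarith [ha.2], by nlinarith [ha.1]⟩ (by nlinarith)

end grovAngle

lemma grovP_eq_grovG_div (k : ℕ) (φ : ℝ) {lam : ℝ} (hφ : cos φ < 1) (h₀ : 0 < lam)
    (h₁ : lam < 1) :
    grovP k φ lam = grovG (2 * k + 1) (cos φ) (grovAngle (cos φ) lam) / (1 - cos φ) := by
  have hθ : sin (arcsin (√lam)) ^ 2 = lam := by
    rw [sin_arcsin (by linarith [sqrt_nonneg lam]) (sqrt_le_one.mpr h₁.le), sq_sqrt h₀.le]
  have hc := cos_grovAngle (neg_one_le_cos φ) hφ.le h₀.le h₁.le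
  have hs : sin (grovAngle (cos φ) lam) ^ 2 = 1 - cos (grovAngle (cos φ) lam) ^ 2 := by
    rw [← sin_sq_add_cos_sq (grovAngle (cos φ) lam)]; ring
  simp only [grovP, grovG]
  rw [hθ, ← grovAngle, hs, hc]
  set x := lam * (1 - cos φ)
  have hx : 0 < x := mul_pos h₀ (by linarith)
  have h2x : 0 < 1 + (1 - x) := by nlinarith [neg_one_le_cos φ]
  have h1c : 1 - cos φ ≠ 0 := by linarith
  rw [show 1 - (1 - x) ^ 2 = x * (1 + (1 - x)) by ring]
  field_simp
  ring

lemma one_add_cos_pos {d : ℝ} (h₀ : 0 ≤ d) (hπ : d < π) : 0 < 1 + cos d := by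
  have := cos_lt_cos_of_nonneg_of_le_pi h₀ le_rfl hπ
  rw [cos_pi] at this
  linarith

section grovG

variable (m p : ℝ)

lemma hasDerivAt_grovG {d : ℝ} (h : 1 + cos d ≠ 0) :
    HasDerivAt (grovG m p) (grovGNum m p d / (1 + cos d) ^ 2) d := by
  have hmd : HasDerivAt (fun d => cos (m * d)) (-(m * sin (m * d))) d := by
    simpa [mul_comm] using ((hasDerivAt_id d).const_mul m).cos
  have hN : HasDerivAt (fun d => (p - cos d) * cos (m * d) + 1 - p * cos d)
      (sin d * cos (m * d) + (p - cos d) * -(m * sin (m * d)) + p * sin d) d := by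
    exact (((((hasDerivAt_cos d).const_sub p).mul hmd).add_const 1).sub
      ((hasDerivAt_cos d).const_mul p)).congr_deriv (by ring)
  refine (hN.div ((hasDerivAt_cos d).const_add 1) h).congr_deriv ?_
  rw [grovGNum]
  field_simp
  ring

lemma hasDerivAt_grovG_of_mem {d : ℝ} (h₀ : 0 ≤ d) (hπ : d < π) :
    HasDerivAt (grovG m p) (grovGNum m p d / (1 + cos d) ^ 2) d :=
  hasDerivAt_grovG m p (one_add_cos_pos h₀ hπ).ne'

variable {m p} {a b : ℝ}

lemma grovG_strictMonoOn (ha : 0 ≤ a) (hb : b < π) (hN : ∀ d ∈ Ioo a b, 0 < grovGNum m p d) :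
    StrictMonoOn (grovG m p) (Icc a b) := by
  refine strictMonoOn_of_deriv_pos (convex_Icc a b) (fun d hd => ?_) fun d hd => ?_
  · exact (hasDerivAt_grovG_of_mem m p (ha.trans hd.1) (hd.2.trans_lt hb)).continuousAt
      |>.continuousWithinAt
  · rw [interior_Icc] at hd
    have h₀ := ha.trans_lt hd.1
    have hπ := hd.2.trans hb
    rw [(hasDerivAt_grovG_of_mem m p h₀.le hπ).deriv]
    exact div_pos (hN d hd) (pow_pos (one_add_cos_pos h₀.le hπ) 2)

lemma grovG_strictAntiOn (ha : 0 ≤ a) (hb : b < π) (hN : ∀ d ∈ Ioo a b, grovGNum m p d < 0) :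
    StrictAntiOn (grovG m p) (Icc a b) := by
  refine strictAntiOn_of_deriv_neg (convex_Icc a b) (fun d hd => ?_) fun d hd => ?_
  · exact (hasDerivAt_grovG_of_mem m p (ha.trans hd.1) (hd.2.trans_lt hb)).continuousAt
      |>.continuousWithinAt
  · rw [interior_Icc] at hd
    have h₀ := ha.trans_lt hd.1
    have hπ := hd.2.trans hb
    rw [(hasDerivAt_grovG_of_mem m p h₀.le hπ).deriv]
    exact div_neg_of_neg_of_pos (hN d hd) (pow_pos (one_add_cos_pos h₀.le hπ) 2)

end grovG

lemma grovGNum_pos {m p d : ℝ} (hm : 1 ≤ m) (hp : -1 ≤ p) (hpd : p < cos d) (hd₀ : 0 < d)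
    (hmd : m * d < π) : 0 < grovGNum m p d := by
  have hdπ : d < π := by nlinarith
  have h₁ : 0 ≤ (1 + p) * sin d * (1 + cos (m * d)) :=
    mul_nonneg (mul_nonneg (by linarith) (sin_pos_of_pos_of_lt_pi hd₀ hdπ).le)
      (by linarith [neg_one_le_cos (m * d)])
  have h₂ : 0 < m * (cos d - p) * (1 + cos d) * sin (m * d) :=
    mul_pos (mul_pos (mul_pos (by linarith) (by linarith)) (one_add_cos_pos hd₀.le hdπ))
      (sin_pos_of_pos_of_lt_pi (mul_pos (by linarith) hd₀) hmd)
  exact add_pos_of_nonneg_of_pos h₁ h₂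

lemma grovGNum_eq_half_angle (m p d : ℝ) :
    grovGNum m p d = 4 * cos (d / 2) * cos (m * (d / 2)) *
      ((1 + p) * sin (d / 2) * cos (m * (d / 2)) +
        m * (cos d - p) * cos (d / 2) * sin (m * (d / 2))) := by
  have h₁ : sin d = 2 * sin (d / 2) * cos (d / 2) := by rw [← sin_two_mul]; ring_nf
  have h₂ : sin (m * d) = 2 * sin (m * (d / 2)) * cos (m * (d / 2)) := by
    rw [← sin_two_mul]; ring_nf
  have h₃ : 1 + cos d = 2 * cos (d / 2) ^ 2 := by rw [cos_sq]; ring_nf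
  have h₄ : 1 + cos (m * d) = 2 * cos (m * (d / 2)) ^ 2 := by rw [cos_sq]; ring_nf
  rw [grovGNum, h₁, h₂, h₃, h₄]
  ring

lemma pi_mul_one_sub_sq_lt (k : ℕ) (hk : 2 ≤ k) {s : ℝ} (hs : sin (π / (4 * k + 2)) ≤ s) :
    π * (1 - s ^ 2) < 3 * √3 / 8 * (2 * k + 1) * (2 * k - 1) * s := by
  have hk' : (2 : ℝ) ≤ k := by exact_mod_cast hk
  set t := π / (4 * k + 2) with ht
  have ht₀ : 0 < t := by positivity
  have hc : 0 < 3 * √3 / 8 * (2 * k + 1) * (2 * k - 1) := by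
    have : (0 : ℝ) < 2 * k - 1 := by linarith
    positivity
  suffices key : π < 3 * √3 / 8 * (2 * k + 1) * (2 * k - 1) * sin t + π * sin t ^ 2 by
    have hs₀ : 0 < sin t := sin_pos_of_pos_of_lt_pi ht₀ (div_lt_self pi_pos (by linarith))
    have hsq := mul_le_mul_of_nonneg_left (pow_le_pow_left₀ hs₀.le hs 2) pi_pos.le
    linarith [mul_le_mul_of_nonneg_left hs hc.le]
  have h3 : (1.732 : ℝ) < √3 := by rw [lt_sqrt (by norm_num)]; norm_num
  have hπ₁ := pi_gt_d4
  have hπ₂ := pi_lt_d4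
  have htk : (4 * k + 2) * t = π := by rw [ht]; field_simp
  have hsin := sin_gt_sub_cube ht₀
  rcases hk.eq_or_lt with rfl | hk3
  · have ht₁ : 0.31415 < t := by rw [ht]; norm_num; linarith
    have ht₂ : t < 0.31416 := by rw [ht]; norm_num; linarith
    have hst : (0.3089 : ℝ) < sin t := by
      nlinarith [pow_lt_pow_left₀ ht₂ ht₀.le (by norm_num : 3 ≠ 0)]
    push_cast
    nlinarith [mul_lt_mul'' h3 hst (by norm_num) (by norm_num)]
  · have hk3' : (3 : ℝ) ≤ k := by exact_mod_cast hk3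
    have ht₁ : t ^ 2 ≤ 1 := by nlinarith
    have hst : 3 / 4 * t < sin t := by nlinarith
    have h64 : 64 < 9 * √3 * (2 * k - 1) := by nlinarith
    calc π < 9 * √3 * (2 * k - 1) / 64 * π := by nlinarith
      _ = 3 * √3 / 8 * (2 * k + 1) * (2 * k - 1) * (3 / 4 * t) := by rw [← htk]; ring
      _ < 3 * √3 / 8 * (2 * k + 1) * (2 * k - 1) * sin t := mul_lt_mul_of_pos_left hst hc
      _ ≤ _ := le_add_of_nonneg_right (by positivity)

lemma pi_div_four_mul_sub_two_mem {k : ℕ} (hk : 2 ≤ k) : π / (4 * k - 2) ∈ Ioc 0 (π / 6) := by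
  have hk' : (2 : ℝ) ≤ k := by exact_mod_cast hk
  exact ⟨div_pos pi_pos (by linarith),
    div_le_div_of_nonneg_left pi_pos.le (by norm_num) (by linarith)⟩

lemma sin_pi_div_four_mul_sub_two_mem {k : ℕ} (hk : 2 ≤ k) :
    sin (π / (4 * k - 2)) ∈ Ioc 0 (1 / 2) := by
  obtain ⟨h₀, h₁⟩ := pi_div_four_mul_sub_two_mem hk
  refine ⟨sin_pos_of_pos_of_lt_pi h₀ (by linarith [pi_pos]), ?_⟩
  rw [← sin_pi_div_six]
  exact sin_le_sin_of_le_of_le_pi_div_two (by linarith [pi_pos]) (by linarith [pi_pos]) h₁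

lemma sin_sq_pi_div_four_mul_sub_two_lt_one {k : ℕ} (hk : 2 ≤ k) :
    sin (π / (4 * k - 2)) ^ 2 < 1 := by
  obtain ⟨h₀, h₁⟩ := sin_pi_div_four_mul_sub_two_mem hk
  nlinarith

lemma half_angle_bracket_pos (k : ℕ) (hk : 2 ≤ k) {s x y u : ℝ} (hs₀ : 0 < s) (hs₁ : s ≤ 1)
    (hs : sin (π / (4 * k + 2)) ≤ s) (hsx₀ : 0 < sin x) (hsx : sin x < s * sin (π / (4 * k - 2)))
    (hu : 3 / 2 * s ^ 2 < u) (hcx : √3 / 2 < cos x) (hsy : 1 / 2 < sin y) :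
    0 < 2 * (1 - s ^ 2) * sin x * cos y + (2 * k + 1) * u * cos x * sin y := by
  have hk' : (2 : ℝ) ≤ k := by exact_mod_cast hk
  have h2k : (0 : ℝ) < 2 * k - 1 := by linarith
  have hs₁' : 0 ≤ 1 - s ^ 2 := sub_nonneg.2 (pow_le_one₀ hs₀.le hs₁)
  have hR : (4 * k - 2) * sin (π / (4 * k - 2)) ≤ π := by
    have := sin_le (pi_div_four_mul_sub_two_mem hk).1.le
    rwa [le_div_iff₀ (by linarith), mul_comm] at this
  have h₁ : -(2 * (1 - s ^ 2) * sin x) ≤ 2 * (1 - s ^ 2) * sin x * cos y := by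
    nlinarith [neg_one_le_cos y, mul_nonneg hs₁' hsx₀.le]
  have h₂ : 2 * (1 - s ^ 2) * sin x < 3 * √3 / 8 * (2 * k + 1) * s ^ 2 := by
    have e : (2 * k - 1) * (2 * (1 - s ^ 2) * sin x) ≤ (1 - s ^ 2) * s * π :=
      calc (2 * k - 1) * (2 * (1 - s ^ 2) * sin x)
          ≤ (2 * k - 1) * (2 * (1 - s ^ 2) * (s * sin (π / (4 * k - 2)))) := by gcongr
        _ = (1 - s ^ 2) * s * ((4 * k - 2) * sin (π / (4 * k - 2))) := by ring
        _ ≤ (1 - s ^ 2) * s * π := by gcongr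
    refine lt_of_mul_lt_mul_left (e.trans_lt ?_) h2k.le
    linarith [mul_lt_mul_of_pos_right (pi_mul_one_sub_sq_lt k hk hs) hs₀]
  have h₃ : 3 * √3 / 8 * (2 * k + 1) * s ^ 2 < (2 * k + 1) * u * cos x * sin y := by
    have : 3 / 2 * s ^ 2 * (√3 / 2) * (1 / 2) < u * cos x * sin y :=
      mul_lt_mul'' (mul_lt_mul'' hu hcx (by positivity) (by positivity)) hsy
        (by positivity) (by norm_num)
    linarith [mul_lt_mul_of_pos_left this (by linarith : (0 : ℝ) < 2 * k + 1)]
  linarith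

lemma half_lt_of_one_sub_cos_lt {d c α : ℝ} (hdπ : d < π) (hα₀ : 0 < α)
    (hα : α ≤ π / 2) (hc₀ : 0 < c) (hc : c ≤ 1) (h : 1 - cos d < 2 * (c * sin α) ^ 2) :
    sin (d / 2) < c * sin α ∧ d / 2 < α := by
  have hsα : 0 < sin α := sin_pos_of_pos_of_lt_pi hα₀ (by linarith [pi_pos])
  have hsin : sin (d / 2) < c * sin α := by
    have h₂ := cos_two_mul_eq_one_sub (d / 2)
    rw [show 2 * (d / 2) = d by ring] at h₂
    exact lt_of_pow_lt_pow_left₀ 2 (by positivity) (by linarith)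
  refine ⟨hsin, lt_of_not_ge fun hle => ?_⟩
  have := sin_le_sin_of_le_of_le_pi_div_two (by linarith [pi_pos]) (by linarith) hle
  nlinarith

lemma half_lt_sin_mul_and_cos_mul_neg {k : ℕ} (hk : 2 ≤ k) {x : ℝ} (hx : x < π / (4 * k - 2))
    (hmx : π / 2 < (2 * k + 1) * x) :
    1 / 2 < sin ((2 * k + 1) * x) ∧ cos ((2 * k + 1) * x) < 0 := by
  have hk' : (2 : ℝ) ≤ k := by exact_mod_cast hk
  have hα := (pi_div_four_mul_sub_two_mem hk).2
  have hx' := (lt_div_iff₀ (by linarith)).1 hx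
  have hlt : (2 * k + 1) * x < 5 * π / 6 := by nlinarith
  refine ⟨?_, cos_neg_of_pi_div_two_lt_of_lt hmx (by linarith [pi_pos])⟩
  rw [← sin_pi_sub, ← sin_pi_div_six]
  exact sin_lt_sin_of_lt_of_le_pi_div_two (by linarith) (by linarith) (by linarith)

lemma grovGNum_neg (k : ℕ) (hk : 2 ≤ k) {p d : ℝ} (hp : -1 ≤ p)
    (hd : 1 - cos d < sin (π / (4 * k - 2)) ^ 2 * (1 - p)) (hdπ : d < π)
    (hmd : π < (2 * k + 1) * d) : grovGNum (2 * k + 1) p d < 0 := by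
  have hk' : (2 : ℝ) ≤ k := by exact_mod_cast hk
  have hπ := pi_pos
  obtain ⟨hα₀, hα⟩ := pi_div_four_mul_sub_two_mem hk
  obtain ⟨-, hR⟩ := sin_pi_div_four_mul_sub_two_mem hk
  set α := π / (4 * k - 2)
  set R := sin α
  have hd₀ : 0 < d := by nlinarith
  have h1p : 0 < 1 - p := by nlinarith [cos_le_one d]
  -- `s = sin (φ / 2)` when `p = cos φ`
  set s := √((1 - p) / 2)
  have hps : p = 1 - 2 * s ^ 2 := by rw [sq_sqrt (by linarith)]; ring
  have hs₀ : 0 < s := sqrt_pos.2 (by linarith)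
  have hs₁ : s ≤ 1 := sqrt_le_one.2 (by linarith)
  rw [grovGNum_eq_half_angle]
  have hx₀ : 0 < d / 2 := by positivity
  have hsx₀ : 0 < sin (d / 2) := sin_pos_of_pos_of_lt_pi hx₀ (by linarith)
  obtain ⟨hsx, hxα⟩ := half_lt_of_one_sub_cos_lt hdπ hα₀ (by linarith) hs₀ hs₁
    (by rw [hps] at hd; linarith)
  have hcx : √3 / 2 < cos (d / 2) := by
    rw [← cos_pi_div_six]
    exact cos_lt_cos_of_nonneg_of_le_pi hx₀.le (by linarith) (by linarith)
  obtain ⟨hsy, hcy⟩ := half_lt_sin_mul_and_cos_mul_neg hk hxα (by linarith)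
  have hu : 3 / 2 * s ^ 2 < cos d - p := by
    have hR2 : R ^ 2 ≤ 1 / 4 := by nlinarith
    linarith [mul_le_mul_of_nonneg_right hR2 h1p.le]
  have hs_gt : sin (π / (4 * k + 2)) < s := by
    have : sin (π / (4 * k + 2)) < sin (d / 2) := by
      have : 0 < π / (4 * k + 2) := by positivity
      refine sin_lt_sin_of_lt_of_le_pi_div_two (by linarith) (by linarith) ?_
      rw [div_lt_iff₀ (by positivity)]
      linarith
    nlinarith
  have hT := half_angle_bracket_pos k hk hs₀ hs₁ hs_gt.le hsx₀ hsx hu hcx hsy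
  rw [hps] at hT ⊢
  have hcx₀ : 0 < cos (d / 2) := (by positivity : (0 : ℝ) < √3 / 2).trans hcx
  exact mul_neg_of_neg_of_pos (mul_neg_of_pos_of_neg (by positivity) hcy) (by linarith)

section grovP

variable (k : ℕ) {φ : ℝ}

lemma grovP_lt_grovP_iff (hφ : cos φ < 1) {s t : ℝ} (hs : s ∈ Ioo 0 1) (ht : t ∈ Ioo 0 1) :
    grovP k φ s < grovP k φ t ↔ grovG (2 * k + 1) (cos φ) (grovAngle (cos φ) s) <
      grovG (2 * k + 1) (cos φ) (grovAngle (cos φ) t) := by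
  rw [grovP_eq_grovG_div k φ hφ hs.1 hs.2, grovP_eq_grovG_div k φ hφ ht.1 ht.2]
  exact div_lt_div_iff_of_pos_right (sub_pos.2 hφ)

variable {a b : ℝ} (hφ₀ : 0 < φ) (hφπ : φ ≤ π) (ha : 0 < a) (hab : a ≤ b)
include hφ₀ hφπ ha hab

lemma grovP_strictMonoOn (hb : b < 1) (hmb : (2 * k + 1) * grovAngle (cos φ) b ≤ π) :
    StrictMonoOn (grovP k φ) (Icc a b) := by
  have hp : cos φ < 1 := by simpa using cos_lt_cos_of_nonneg_of_le_pi le_rfl hφπ hφ₀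
  have hp₁ := neg_one_le_cos φ
  have hδ := (grovAngle_strictMonoOn hp₁ hp).mono (Icc_subset_Icc ha.le hb.le)
  have hG : StrictMonoOn (grovG (2 * k + 1) (cos φ))
      (Icc (grovAngle (cos φ) a) (grovAngle (cos φ) b)) := by
    refine grovG_strictMonoOn (grovAngle_pos hp ha).le (grovAngle_lt_pi hp₁ hp hb) fun d hd => ?_
    have hd₀ := (grovAngle_pos hp ha).trans hd.1
    have hcos := cos_lt_cos_of_nonneg_of_le_pi hd₀.le (grovAngle_lt_pi hp₁ hp hb).le hd.2
    rw [cos_grovAngle hp₁ hp.le (ha.le.trans hab) hb.le] at hcos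
    refine grovGNum_pos (le_add_of_nonneg_left (by positivity)) hp₁ (by nlinarith) hd₀ ?_
    exact (mul_lt_mul_of_pos_left hd.2 (by positivity)).trans_le hmb
  intro s hs t ht hst
  rw [grovP_lt_grovP_iff k hp ⟨ha.trans_le hs.1, hs.2.trans_lt hb⟩
    ⟨ha.trans_le ht.1, ht.2.trans_lt hb⟩]
  exact hG (hδ.monotoneOn.mapsTo_Icc hs) (hδ.monotoneOn.mapsTo_Icc ht) (hδ hs ht hst)

lemma grovP_strictAntiOn (hk : 2 ≤ k) (hb : b < sin (π / (4 * k - 2)) ^ 2)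
    (hma : π ≤ (2 * k + 1) * grovAngle (cos φ) a) : StrictAntiOn (grovP k φ) (Icc a b) := by
  have hp : cos φ < 1 := by simpa using cos_lt_cos_of_nonneg_of_le_pi le_rfl hφπ hφ₀
  have hp₁ := neg_one_le_cos φ
  have hb₁ := hb.trans (sin_sq_pi_div_four_mul_sub_two_lt_one hk)
  have hδ := (grovAngle_strictMonoOn hp₁ hp).mono (Icc_subset_Icc ha.le hb₁.le)
  have hG : StrictAntiOn (grovG (2 * k + 1) (cos φ))
      (Icc (grovAngle (cos φ) a) (grovAngle (cos φ) b)) := by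
    refine grovG_strictAntiOn (grovAngle_pos hp ha).le (grovAngle_lt_pi hp₁ hp hb₁) fun d hd => ?_
    have hd₀ := (grovAngle_pos hp ha).trans hd.1
    have hdπ := hd.2.trans (grovAngle_lt_pi hp₁ hp hb₁)
    have hcos := cos_lt_cos_of_nonneg_of_le_pi hd₀.le (grovAngle_lt_pi hp₁ hp hb₁).le hd.2
    rw [cos_grovAngle hp₁ hp.le (ha.le.trans hab) hb₁.le] at hcos
    refine grovGNum_neg k hk hp₁ ?_ hdπ ?_
    · nlinarith [mul_lt_mul_of_pos_right hb (sub_pos.2 hp)]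
    · exact hma.trans_lt (mul_lt_mul_of_pos_left hd.1 (by positivity))
  intro s hs t ht hst
  rw [grovP_lt_grovP_iff k hp ⟨ha.trans_le ht.1, ht.2.trans_lt hb₁⟩
    ⟨ha.trans_le hs.1, hs.2.trans_lt hb₁⟩]
  exact hG (hδ.monotoneOn.mapsTo_Icc hs) (hδ.monotoneOn.mapsTo_Icc ht) (hδ hs ht hst)

end grovP

lemma not_isLocalMin_of_strictMonoOn_Icc {f : ℝ → ℝ} {a x : ℝ} (ha : a < x)
    (hf : StrictMonoOn f (Icc a x)) : ¬IsLocalMin f x := fun hmin => by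
  have hle : ∀ᶠ y in 𝓝[<] x, f x ≤ f y := hmin.filter_mono nhdsWithin_le_nhds
  obtain ⟨y, hfy, hy⟩ := (hle.and (Ioo_mem_nhdsLT ha)).exists
  exact hfy.not_gt (hf ⟨hy.1.le, hy.2.le⟩ ⟨ha.le, le_rfl⟩ hy.2)

lemma not_isLocalMin_of_strictAntiOn_Icc {f : ℝ → ℝ} {x b : ℝ} (hb : x < b)
    (hf : StrictAntiOn f (Icc x b)) : ¬IsLocalMin f x := fun hmin => by
  have hle : ∀ᶠ y in 𝓝[>] x, f x ≤ f y := hmin.filter_mono nhdsWithin_le_nhds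
  obtain ⟨y, hfy, hy⟩ := (hle.and (Ioo_mem_nhdsGT hb)).exists
  exact hfy.not_gt (hf ⟨le_rfl, hb.le⟩ ⟨hy.1.le, hy.2.le⟩ hy.1)

/-- For k ≥ 2 and every φ ∈ (φ_k^min, π], the function
λ ↦ P_k^φ(λ) has no local minimum point in Λ_k = [sin²(π/(4k+2)), sin²(π/(4k−2))). -/
theorem no_local_min_in_range
    (k : ℕ) (hk : 2 ≤ k) (φ : ℝ) (hφ : φ ∈ Set.Ioc (phiMin k) Real.pi) :
    ∀ lam ∈ Set.Ico (Real.sin (Real.pi / (4 * (k : ℝ) + 2)) ^ 2)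
        (Real.sin (Real.pi / (4 * (k : ℝ) - 2)) ^ 2),
      ¬ IsLocalMin (grovP k φ) lam := by
  obtain ⟨hφmin, hφπ⟩ := hφ
  have hφ₀ : 0 < φ := (arccos_nonneg _).trans_lt hφmin
  rintro lam ⟨hlamL, hlamR⟩
  have hk' : (2 : ℝ) ≤ k := by exact_mod_cast hk
  have hlam₀ : 0 < lam := (pow_pos (sin_pos_of_pos_of_lt_pi (by positivity)
    (div_lt_self pi_pos (by linarith))) 2).trans_le hlamL
  rcases le_or_gt ((2 * k + 1) * grovAngle (cos φ) lam) π with hle | hgt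
  · have hlam₁ := hlamR.trans (sin_sq_pi_div_four_mul_sub_two_lt_one hk)
    exact not_isLocalMin_of_strictMonoOn_Icc (half_lt_self hlam₀)
      (grovP_strictMonoOn k hφ₀ hφπ (half_pos hlam₀) (half_le_self hlam₀.le) hlam₁ hle)
  · exact not_isLocalMin_of_strictAntiOn_Icc (left_lt_add_div_two.2 hlamR)
      (grovP_strictAntiOn k hφ₀ hφπ hlam₀ (left_lt_add_div_two.2 hlamR).le hk
        (add_div_two_lt_right.2 hlamR) hgt.le)
end
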